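/- arXiv:2112.07073 — 5 statements merged into one kernel-verified Lean document; each statement's English description precedes it below -/
import Mathlib

section
/- Let λ ∈ [0, 1) and let f be analytic on the open unit disk 𝔻 with f(0) = 0, f′(0) = 1, f(z) ≠ 0 for all z ∈ 𝔻 \ {0}, and f′(z) ≠ 0 for all z ∈ 𝔻. Define R_λ(z) = λ·z f′(z)/f(z) + (1−λ)·(1 + z f″(z)/f′(z)) and C(λ) = (1−λ)·√(1 + 2/(1−λ)). If for every z ∈ 𝔻 the value R_λ(z) does not belong to the set {iy : y ∈ ℝ, |y| ≥ C(λ)} (the two slits along the imaginary axis), then Re(z f′(z)/f(z)) > 0 for all z ∈ 𝔻. -/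
/-!
Put `p z = z f'(z) / f(z)`, analytic on `𝔻` with `p 0 = 1`. If `Re p` is not positive, take a
point `z₀` of least modulus with `Re p z₀ ≤ 0`; then `p z₀ = i a` with `a ≠ 0` because `f' ≠ 0`.
The Cayley transform `w = (1 - p) / (1 + p)` vanishes at `0` and `|w|` is maximal on
`|z| ≤ |z₀|` at `z₀`, so Jack's lemma gives `z₀ w'(z₀) = k w(z₀)` with `k ≥ 1`, i.e.
`z₀ p'(z₀) = -k (1 + a²) / 2` (the Miller–Mocanu lemma). Since `1 + z f''/f' = p + z p'/p`,
`R_λ(z₀) = i (a + μ k (1 + a²) / (2a))` with `μ = 1 - λ`, and by AM–GM this imaginary part has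
modulus at least `√(μ² + 2μ) = C(λ)`: `R_λ(z₀)` lies on one of the slits.
-/

open Complex ComplexConjugate Metric Filter Set Topology

/-- `‖q‖²` is stationary along the circle through `z₀` and nondecreasing along its radius. -/
theorem HasDerivAt.exists_nonneg_of_isMaxOn_norm {q : ℂ → ℂ} {d z₀ : ℂ}
    (hq : HasDerivAt q d z₀) (hmax : IsMaxOn (‖q ·‖) (closedBall 0 ‖z₀‖) z₀) (hq₀ : q z₀ ≠ 0) :
    ∃ t : ℝ, 0 ≤ t ∧ z₀ * d = t * q z₀ := by
  have hΦ := (hq.hasFDerivAt.restrictScalars ℝ).norm_sq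
  set Φ' := 2 • (innerSL ℝ (q z₀)).comp
    ((ContinuousLinearMap.toSpanSingleton ℂ d).restrictScalars ℝ)
  have hΦ' : ∀ v : ℂ, Φ' v = 2 * (v * d * conj (q z₀)).re := by
    intro v
    simp [Φ', Complex.inner]
    ring
  have hmax' : IsMaxOn (‖q ·‖ ^ 2) (closedBall 0 ‖z₀‖) z₀ :=
    fun z hz => pow_le_pow_left₀ (norm_nonneg _) (hmax hz) 2
  set m := z₀ * d * conj (q z₀)
  have hre : 0 ≤ m.re := by
    have hradial : -z₀ ∈ posTangentConeAt (closedBall 0 ‖z₀‖) z₀ := by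
      refine mem_posTangentConeAt_of_segment_subset ?_
      rw [add_neg_cancel]
      exact (convex_closedBall 0 _).segment_subset (mem_closedBall_zero_iff.2 le_rfl)
        (mem_closedBall_self (norm_nonneg z₀))
    have := hmax'.localize.hasFDerivWithinAt_nonpos hΦ.hasFDerivWithinAt hradial
    rw [hΦ', show -z₀ * d * conj (q z₀) = -m by ring, neg_re] at this
    linarith
  have him : m.im = 0 := by
    have hcircle : HasDerivAt (fun θ : ℝ => z₀ * cexp (θ * I)) (z₀ * I) 0 := by
      simpa using (((hasDerivAt_id (0 : ℂ)).mul_const I).cexp.const_mul z₀).comp_ofReal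
    have hloc : IsLocalMax ((‖q ·‖ ^ 2) ∘ fun θ : ℝ => z₀ * cexp (θ * I)) 0 :=
      Eventually.of_forall fun θ => by
        simpa using hmax' (by simp : z₀ * cexp (θ * I) ∈ closedBall 0 ‖z₀‖)
    have := hloc.hasDerivAt_eq_zero (hΦ.comp_hasDerivAt_of_eq 0 hcircle (by simp))
    rw [hΦ', show z₀ * I * d * conj (q z₀) = m * I by ring, mul_I_re] at this
    linarith
  have hm : (m.re : ℂ) = m := Complex.ext rfl (by simp [him])
  have hconj : conj (q z₀) ≠ 0 := (map_ne_zero _).2 hq₀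
  refine ⟨m.re / normSq (q z₀), div_nonneg hre (normSq_nonneg _), ?_⟩
  rw [ofReal_div, hm, ← mul_conj]
  field_simp
  rfl

theorem Real.sqrt_sq_add_two_mul_le_abs {μ k a : ℝ} (hμ : 0 ≤ μ) (hk : 1 ≤ k) (ha : a ≠ 0) :
    √(μ ^ 2 + 2 * μ) ≤ |a + μ * (k * (1 + a ^ 2) / (2 * a))| := by
  set y := a + μ * (k * (1 + a ^ 2) / (2 * a))
  have h2ay : 2 * a * y = 2 * a ^ 2 + μ * k * (1 + a ^ 2) := by
    simp only [y]
    field_simp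
  have hlow : 2 * a ^ 2 + μ * (1 + a ^ 2) ≤ 2 * a * y := by
    rw [h2ay]
    nlinarith [mul_nonneg hμ (by positivity : (0 : ℝ) ≤ 1 + a ^ 2)]
  have hsq : (2 * a) ^ 2 * (μ ^ 2 + 2 * μ) ≤ (2 * a) ^ 2 * y ^ 2 := by
    calc (2 * a) ^ 2 * (μ ^ 2 + 2 * μ)
        ≤ (2 * a) ^ 2 * (μ ^ 2 + 2 * μ) + ((2 + μ) * a ^ 2 - μ) ^ 2 := by nlinarith
      _ = (2 * a ^ 2 + μ * (1 + a ^ 2)) ^ 2 := by ring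
      _ ≤ (2 * a * y) ^ 2 := pow_le_pow_left₀ (by positivity) hlow 2
      _ = (2 * a) ^ 2 * y ^ 2 := by ring
  rw [← Real.sqrt_sq_eq_abs]
  exact Real.sqrt_le_sqrt (le_of_mul_le_mul_left hsq (by positivity))

theorem one_add_mul_deriv_deriv_div_eq {𝕜 : Type*} [NontriviallyNormedField 𝕜] {f : 𝕜 → 𝕜}
    {z : 𝕜} (hz : z ≠ 0) (hf' : DifferentiableAt 𝕜 (deriv f) z) (hfz : f z ≠ 0)
    (hf'z : deriv f z ≠ 0) :
    1 + z * deriv (deriv f) z / deriv f z =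
      z * deriv f z / f z + z * deriv (fun w => w * deriv f w / f w) z / (z * deriv f z / f z) := by
  have hf := (differentiableAt_of_deriv_ne_zero hf'z).hasDerivAt
  rw [(((hasDerivAt_id' z).fun_mul hf'.hasDerivAt).fun_div hf hfz).deriv]
  field_simp
  ring

namespace Complex

/-- By the Schwarz lemma, `q = w / z` satisfies `‖q‖ ≤ ‖w z₀‖ / ‖z₀‖ = ‖q z₀‖` on the closed
disc, so `z₀ q'(z₀) / q(z₀) ≥ 0`, and `z₀ w'(z₀) / w(z₀) = 1 + z₀ q'(z₀) / q(z₀)`. -/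
theorem exists_one_le_mul_deriv_eq_of_norm_le {w : ℂ → ℂ} {U : Set ℂ} {z₀ : ℂ} (hU : IsOpen U)
    (hsub : closedBall 0 ‖z₀‖ ⊆ U) (hw : DifferentiableOn ℂ w U) (hw₀ : w 0 = 0)
    (hmax : ∀ z ∈ ball 0 ‖z₀‖, ‖w z‖ ≤ ‖w z₀‖) (hwz₀ : w z₀ ≠ 0) :
    ∃ k : ℝ, 1 ≤ k ∧ z₀ * deriv w z₀ = k * w z₀ := by
  have hz₀ : z₀ ≠ 0 := by
    rintro rfl
    exact hwz₀ hw₀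
  have hr : ‖z₀‖ ≠ 0 := norm_ne_zero_iff.2 hz₀
  set q := dslope w 0
  have hwq : ∀ z, w z = z * q z := fun z => by
    simpa [hw₀] using (sub_smul_dslope w 0 z).symm
  have h0U : (0 : ℂ) ∈ U := hsub (mem_closedBall_self (norm_nonneg _))
  have hz₀U : z₀ ∈ U := hsub (mem_closedBall_zero_iff.2 le_rfl)
  have hq : DifferentiableOn ℂ q U := (differentiableOn_dslope (hU.mem_nhds h0U)).2 hw
  have hq_ball : MapsTo q (ball 0 ‖z₀‖) (closedBall 0 (‖w z₀‖ / ‖z₀‖)) := fun z hz =>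
    mem_closedBall_zero_iff.2 <| norm_dslope_le_div_of_mapsTo_ball
      (hw.mono (ball_subset_closedBall.trans hsub))
      (fun z hz => mem_closedBall_iff_norm.2 (by simpa [hw₀] using hmax z hz)) hz
  have hq_closedBall := hq_ball.closure_of_continuousOn
    (by rw [closure_ball _ hr]; exact hq.continuousOn.mono hsub)
  rw [closure_ball _ hr, isClosed_closedBall.closure_eq] at hq_closedBall
  have hqmax : IsMaxOn (‖q ·‖) (closedBall 0 ‖z₀‖) z₀ := fun z hz => by
    simpa [hwq z₀, hz₀] using hq_closedBall hz
  have hqz₀ : q z₀ ≠ 0 := fun h => hwz₀ (by rw [hwq, h, mul_zero])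
  have hd := (hq.differentiableAt (hU.mem_nhds hz₀U)).hasDerivAt
  obtain ⟨t, ht, hzd⟩ := hd.exists_nonneg_of_isMaxOn_norm hqmax hqz₀
  have hw' : deriv w z₀ = q z₀ + z₀ * deriv q z₀ := by
    rw [show w = fun z => z * q z from funext hwq]
    simpa using ((hasDerivAt_id' z₀).fun_mul hd).deriv
  refine ⟨1 + t, by linarith, ?_⟩
  rw [hw', hwq, mul_add, hzd]
  push_cast
  ring

theorem norm_one_sub_sq_add (u : ℂ) : ‖1 - u‖ ^ 2 + 4 * u.re = ‖1 + u‖ ^ 2 := by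
  rw [← normSq_eq_norm_sq, ← normSq_eq_norm_sq, normSq_apply, normSq_apply]
  simp only [sub_re, sub_im, add_re, add_im, one_re, one_im]
  ring

theorem norm_one_sub_div_one_add_le_one {u : ℂ} (hu : 0 ≤ u.re) :
    ‖(1 - u) / (1 + u)‖ ≤ 1 := by
  rw [norm_div]
  refine div_le_one_of_le₀ ?_ (norm_nonneg _)
  have := norm_one_sub_sq_add u
  exact (pow_le_pow_iff_left₀ (norm_nonneg _) (norm_nonneg _) two_ne_zero).1 (by linarith)

theorem norm_one_sub_div_one_add_eq_one {u : ℂ} (hu : u.re = 0) :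
    ‖(1 - u) / (1 + u)‖ = 1 := by
  have hsq := norm_one_sub_sq_add u
  rw [hu, mul_zero, add_zero] at hsq
  have hne : 1 + u ≠ 0 := fun h => by simpa [hu] using congrArg re h
  rw [norm_div, (sq_eq_sq₀ (norm_nonneg _) (norm_nonneg _)).1 hsq,
    div_self (norm_ne_zero_iff.2 hne)]

theorem exists_min_norm_of_re_nonpos {p : ℂ → ℂ} (hp : ContinuousOn p (ball 0 1)) {z₁ : ℂ}
    (hz₁ : z₁ ∈ ball (0 : ℂ) 1) (hre : (p z₁).re ≤ 0) :
    ∃ z₀ ∈ ball (0 : ℂ) 1, (p z₀).re ≤ 0 ∧ ∀ z ∈ ball (0 : ℂ) ‖z₀‖, 0 < (p z).re := by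
  have hsub : closedBall (0 : ℂ) ‖z₁‖ ⊆ ball 0 1 :=
    closedBall_subset_ball (mem_ball_zero_iff.1 hz₁)
  set K := closedBall (0 : ℂ) ‖z₁‖ ∩ (fun z => (p z).re) ⁻¹' Iic 0
  have hK : IsCompact K := (isCompact_closedBall 0 _).of_isClosed_subset
    ((continuous_re.comp_continuousOn (hp.mono hsub)).preimage_isClosed_of_isClosed
      isClosed_closedBall isClosed_Iic) inter_subset_left
  obtain ⟨z₀, ⟨hz₀, hz₀re⟩, hmin⟩ :=
    hK.exists_isMinOn ⟨z₁, mem_closedBall_zero_iff.2 le_rfl, hre⟩ continuous_norm.continuousOn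
  refine ⟨z₀, hsub hz₀, hz₀re, fun z hz => not_le.1 fun hz' => ?_⟩
  rw [mem_ball_zero_iff] at hz
  exact hz.not_ge
    (hmin ⟨mem_closedBall_zero_iff.2 (hz.le.trans (mem_closedBall_zero_iff.1 hz₀)), hz'⟩)

theorem exists_mul_deriv_eq_of_re_nonpos {p : ℂ → ℂ} (hp : DifferentiableOn ℂ p (ball 0 1))
    (hp₀ : p 0 = 1) {z₁ : ℂ} (hz₁ : z₁ ∈ ball (0 : ℂ) 1) (hre : (p z₁).re ≤ 0) :
    ∃ z₀ ∈ ball (0 : ℂ) 1, z₀ ≠ 0 ∧ (p z₀).re = 0 ∧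
      ∃ k : ℝ, 1 ≤ k ∧ 2 * z₀ * deriv p z₀ = -k * (1 - p z₀ ^ 2) := by
  obtain ⟨z₀, hz₀, hz₀re, hpos⟩ := exists_min_norm_of_re_nonpos hp.continuousOn hz₁ hre
  have hz₀ne : z₀ ≠ 0 := by
    rintro rfl
    norm_num [hp₀] at hz₀re
  have hr : ‖z₀‖ ≠ 0 := norm_ne_zero_iff.2 hz₀ne
  have hsub : closedBall (0 : ℂ) ‖z₀‖ ⊆ ball 0 1 :=
    closedBall_subset_ball (mem_ball_zero_iff.1 hz₀)
  have hnonneg : MapsTo (fun z => (p z).re) (closedBall 0 ‖z₀‖) (Ici 0) := by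
    have := MapsTo.closure_of_continuousOn (f := fun z => (p z).re) (t := Ici 0)
      (fun z hz => (hpos z hz).le)
      (by
        rw [closure_ball _ hr]
        exact continuous_re.comp_continuousOn (hp.continuousOn.mono hsub))
    rwa [closure_ball _ hr, closure_Ici] at this
  have hz₀re' : (p z₀).re = 0 :=
    le_antisymm hz₀re (hnonneg (mem_closedBall_zero_iff.2 le_rfl))
  set U := ball (0 : ℂ) 1 ∩ p ⁻¹' {-1}ᶜ
  have hU : IsOpen U := hp.continuousOn.isOpen_inter_preimage isOpen_ball isOpen_compl_singleton
  have hUsub : closedBall 0 ‖z₀‖ ⊆ U := fun z hz =>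
    ⟨hsub hz, fun h => absurd (hnonneg hz) (by norm_num [show p z = -1 from h])⟩
  set w := fun z => (1 - p z) / (1 + p z)
  have hw : DifferentiableOn ℂ w U := by
    refine ((differentiableOn_const 1).sub (hp.mono inter_subset_left)).div
      ((differentiableOn_const 1).add (hp.mono inter_subset_left)) fun z hz h => hz.2 ?_
    simpa using eq_neg_of_add_eq_zero_right h
  have hwz₀ : ‖w z₀‖ = 1 := norm_one_sub_div_one_add_eq_one hz₀re'
  obtain ⟨k, hk, hkw⟩ := exists_one_le_mul_deriv_eq_of_norm_le hU hUsub hw (by simp [w, hp₀])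
    (fun z hz => hwz₀ ▸ norm_one_sub_div_one_add_le_one (hpos z hz).le)
    (norm_ne_zero_iff.1 (hwz₀.trans_ne one_ne_zero))
  have h1p : 1 + p z₀ ≠ 0 := fun h => by simpa [hz₀re'] using congrArg re h
  have hpd := (hp.differentiableAt (isOpen_ball.mem_nhds hz₀)).hasDerivAt
  have hw' : deriv w z₀ = -2 * deriv p z₀ / (1 + p z₀) ^ 2 := by
    rw [((hpd.const_sub 1).fun_div (hpd.const_add 1) h1p).deriv]
    ring
  refine ⟨z₀, hz₀, hz₀ne, hz₀re', k, hk, ?_⟩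
  rw [hw'] at hkw
  simp only [w] at hkw
  field_simp at hkw
  linear_combination -hkw

theorem re_pos_of_forall_ne_slit {p : ℂ → ℂ} {μ : ℝ} (hμ : 0 ≤ μ)
    (hp : DifferentiableOn ℂ p (ball 0 1)) (hp₀ : p 0 = 1)
    (hp_ne : ∀ z ∈ ball (0 : ℂ) 1, p z ≠ 0)
    (hslit : ∀ z ∈ ball (0 : ℂ) 1, z ≠ 0 → ∀ y : ℝ, √(μ ^ 2 + 2 * μ) ≤ |y| →
      p z + μ * (z * deriv p z / p z) ≠ y * I) :
    ∀ z ∈ ball (0 : ℂ) 1, 0 < (p z).re := by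
  intro z₁ hz₁
  by_contra! hneg
  obtain ⟨z₀, hz₀, hz₀ne, hre, k, hk, hkp⟩ := exists_mul_deriv_eq_of_re_nonpos hp hp₀ hz₁ hneg
  set a := (p z₀).im
  have hpa : p z₀ = a * I := Complex.ext (by simp [hre]) (by simp [a])
  have ha : (a : ℂ) ≠ 0 := fun h => hp_ne z₀ hz₀ (by rw [hpa, h, zero_mul])
  have hquot : z₀ * deriv p z₀ / p z₀ = ((k * (1 + a ^ 2) / (2 * a) : ℝ) : ℂ) * I := by
    rw [hpa] at hkp ⊢
    push_cast
    field_simp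
    linear_combination hkp - k * I_sq
  refine hslit z₀ hz₀ hz₀ne _ (Real.sqrt_sq_add_two_mul_le_abs hμ hk (ofReal_ne_zero.1 ha)) ?_
  rw [hquot, hpa]
  push_cast
  ring

theorem exists_differentiableOn_eq_mul_deriv_div {f : ℂ → ℂ} {U : Set ℂ} (hU : IsOpen U)
    (h₀ : 0 ∈ U) (hf : DifferentiableOn ℂ f U) (hf₀ : f 0 = 0) (hf'₀ : deriv f 0 ≠ 0)
    (hfne : ∀ z ∈ U, z ≠ 0 → f z ≠ 0) (hf'ne : ∀ z ∈ U, deriv f z ≠ 0) :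
    ∃ p : ℂ → ℂ, DifferentiableOn ℂ p U ∧ p 0 = 1 ∧ (∀ z ∈ U, p z ≠ 0) ∧
      ∀ z ∈ U, z ≠ 0 → p z = z * deriv f z / f z := by
  have hslope : ∀ z ≠ 0, dslope f 0 z = f z / z := fun z hz => by
    rw [dslope_of_ne _ hz, slope_def_field, hf₀, sub_zero, sub_zero]
  have hne : ∀ z ∈ U, dslope f 0 z ≠ 0 := fun z hz => by
    rcases eq_or_ne z 0 with rfl | hz0
    · rwa [dslope_same]
    · rw [hslope z hz0]
      exact div_ne_zero (hfne z hz hz0) hz0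
  refine ⟨fun z => deriv f z / dslope f 0 z,
    (hf.deriv hU).div ((differentiableOn_dslope (hU.mem_nhds h₀)).2 hf) hne,
    by simp [hf'₀], fun z hz => div_ne_zero (hf'ne z hz) (hne z hz), fun z hz hz0 => ?_⟩
  simp only [hslope z hz0, div_div_eq_mul_div, mul_comm]

end Complex

theorem stmt_1 (lam : ℝ) (hlam : lam ∈ Set.Ico (0 : ℝ) 1)
    (f : ℂ → ℂ) (hanal : DifferentiableOn ℂ f (ball (0 : ℂ) 1))
    (hf0 : f 0 = 0) (hf'0 : deriv f 0 = 1)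
    (hfne : ∀ z ∈ ball (0 : ℂ) 1, z ≠ 0 → f z ≠ 0)
    (hf'ne : ∀ z ∈ ball (0 : ℂ) 1, deriv f z ≠ 0)
    (R : ℂ → ℂ)
    (hR : ∀ z, R z = (lam : ℂ) * (z * deriv f z / f z) +
      (1 - (lam : ℂ)) * (1 + z * deriv (deriv f) z / deriv f z))
    (C : ℝ) (hC : C = (1 - lam) * Real.sqrt (1 + 2 / (1 - lam)))
    (hslit : ∀ z ∈ ball (0 : ℂ) 1, z ≠ 0 → ∀ y : ℝ, C ≤ |y| → R z ≠ y * I) :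
    ∀ z ∈ ball (0 : ℂ) 1, z ≠ 0 → 0 < (z * deriv f z / f z).re := by
  obtain ⟨p, hp, hp₀, hp_ne, hpf⟩ := exists_differentiableOn_eq_mul_deriv_div isOpen_ball
    (mem_ball_self one_pos) hanal hf0 (hf'0 ▸ one_ne_zero) hfne hf'ne
  have hRp : ∀ z ∈ ball (0 : ℂ) 1, z ≠ 0 →
      R z = p z + ((1 - lam : ℝ) : ℂ) * (z * deriv p z / p z) := fun z hz hz0 => by
    have hev : p =ᶠ[𝓝 z] fun w => w * deriv f w / f w := by
      filter_upwards [isOpen_ball.mem_nhds hz, eventually_ne_nhds hz0] with w hw hw0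
      exact hpf w hw hw0
    rw [hR, hev.deriv_eq, hpf z hz hz0, one_add_mul_deriv_deriv_div_eq hz0
      ((hanal.deriv isOpen_ball).differentiableAt (isOpen_ball.mem_nhds hz))
      (hfne z hz hz0) (hf'ne z hz)]
    push_cast
    ring
  have hμ : 0 < 1 - lam := sub_pos.2 hlam.2
  have hC' : C = √((1 - lam) ^ 2 + 2 * (1 - lam)) := by
    rw [hC, ← Real.sqrt_sq hμ.le, ← Real.sqrt_mul (sq_nonneg _), Real.sqrt_sq hμ.le]
    congr 1
    field_simp
  intro z hz hz0
  rw [← hpf z hz hz0]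
  refine re_pos_of_forall_ne_slit hμ.le hp hp₀ hp_ne (fun w hw hw0 y hy => ?_) z hz
  rw [← hRp w hw hw0]
  exact hslit w hw hw0 y (hC' ▸ hy)
end

section
/- Let f be analytic on the open unit disk 𝔻 with f(0) = 0, f′(0) = 1, f(z) ≠ 0 for all z ∈ 𝔻 \ {0}, and f′(z) ≠ 0 for all z ∈ 𝔻. If for every z ∈ 𝔻 the value 1 + z f″(z)/f′(z) does not belong to the set {iy : y ∈ ℝ, |y| ≥ √3}, then Re(z f′(z)/f(z)) > 0 for all z ∈ 𝔻. -/
/-!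
Write `p = z f' / f`, so that `p 0 = 1` and `1 + z f'' / f' = p + z p' / p`. If `Re p` is not
positive on the disc, take a zero `z₀` of `Re p` of least modulus; then `p z₀ = i a` with `a ≠ 0`
and `Re p ≥ 0` on `|z| ≤ |z₀|`. Jack's lemma applied to the Cayley transform `(1 - p) / (1 + p)`
gives `z₀ p'(z₀) = -k (1 + a²) / 2` with `k ≥ 1`, hence
`1 + z₀ f''(z₀) / f'(z₀) = i (a + k (1 + a²) / (2 a))`, and `|a| + (1 + a²) / (2 |a|) ≥ √3`.
-/

open Complex ComplexConjugate Metric Set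

section

variable {E : Type*} [NormedAddCommGroup E] [NormedSpace ℝ E]

theorem exists_smul_eq_zero_of_nonpos {u : E → ℝ} {z : E}
    (hu : ContinuousOn u (closedBall 0 ‖z‖)) (h0 : 0 ≤ u 0) (hz : u z ≤ 0) :
    ∃ t ∈ Icc (0 : ℝ) 1, u (t • z) = 0 := by
  have hcont : ContinuousOn (fun t : ℝ => u (t • z)) (Icc 0 1) :=
    hu.comp (continuous_id.smul continuous_const).continuousOn fun t ht => by
      rw [mem_closedBall_zero_iff, norm_smul, Real.norm_of_nonneg ht.1]
      exact mul_le_of_le_one_left (norm_nonneg _) ht.2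
  simpa using intermediate_value_Icc' zero_le_one hcont ⟨by simpa using hz, by simpa using h0⟩

theorem exists_eq_zero_forall_mem_closedBall_nonneg [ProperSpace E] {u : E → ℝ} {R : ℝ}
    (hu : ContinuousOn u (ball 0 R)) (hu0 : 0 < u 0) {z₁ : E} (hz₁ : z₁ ∈ ball 0 R)
    (hz₁u : u z₁ ≤ 0) :
    ∃ z₀ ∈ ball (0 : E) R, u z₀ = 0 ∧ ∀ z ∈ closedBall (0 : E) ‖z₀‖, 0 ≤ u z := by
  have hsub : closedBall (0 : E) ‖z₁‖ ⊆ ball 0 R := closedBall_subset_ball (mem_ball_zero_iff.1 hz₁)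
  set Z := closedBall (0 : E) ‖z₁‖ ∩ u ⁻¹' {0}
  have hZ : IsCompact Z := (isCompact_closedBall 0 _).of_isClosed_subset
    ((hu.mono hsub).preimage_isClosed_of_isClosed isClosed_closedBall isClosed_singleton)
    inter_subset_left
  have hsmul_mem : ∀ {t : ℝ} {z : E}, t ∈ Icc (0 : ℝ) 1 → ‖z‖ ≤ ‖z₁‖ → u (t • z) = 0 → t • z ∈ Z :=
    fun ht hz htz => ⟨by
      rw [mem_closedBall_zero_iff, norm_smul, Real.norm_of_nonneg ht.1]
      exact (mul_le_of_le_one_left (norm_nonneg _) ht.2).trans hz, htz⟩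
  obtain ⟨t, ht, htz⟩ := exists_smul_eq_zero_of_nonpos (hu.mono hsub) hu0.le hz₁u
  obtain ⟨z₀, hz₀, hmin⟩ :=
    hZ.exists_isMinOn ⟨_, hsmul_mem ht le_rfl htz⟩ continuous_norm.continuousOn
  refine ⟨z₀, hsub hz₀.1, hz₀.2, fun z hz => ?_⟩
  by_contra! hneg
  have hzz₀ : ‖z‖ ≤ ‖z₀‖ := mem_closedBall_zero_iff.1 hz
  have hzz₁ : ‖z‖ ≤ ‖z₁‖ := hzz₀.trans (mem_closedBall_zero_iff.1 hz₀.1)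
  obtain ⟨t, ht, htz⟩ := exists_smul_eq_zero_of_nonpos
    (hu.mono ((closedBall_subset_closedBall hzz₁).trans hsub)) hu0.le hneg.le
  have ht1 : t < 1 := ht.2.lt_of_ne (by rintro rfl; simp at htz; linarith)
  have hz0 : 0 < ‖z‖ := norm_pos_iff.2 (by rintro rfl; linarith)
  have hle : ‖z₀‖ ≤ ‖t • z‖ := hmin (hsmul_mem ht hzz₁ htz)
  rw [norm_smul, Real.norm_of_nonneg ht.1] at hle
  nlinarith

end

theorem norm_one_sub_le_norm_one_add {q : ℂ} (hq : 0 ≤ q.re) : ‖1 - q‖ ≤ ‖1 + q‖ := by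
  rw [← sq_le_sq₀ (norm_nonneg _) (norm_nonneg _), Complex.sq_norm, Complex.sq_norm,
    normSq_apply, normSq_apply]
  simp only [sub_re, add_re, sub_im, add_im, one_re, one_im]
  nlinarith

theorem norm_one_sub_eq_norm_one_add {q : ℂ} (hq : q.re = 0) : ‖1 - q‖ = ‖1 + q‖ := by
  rw [← sq_eq_sq₀ (norm_nonneg _) (norm_nonneg _), Complex.sq_norm, Complex.sq_norm,
    normSq_apply, normSq_apply]
  simp only [sub_re, add_re, sub_im, add_im, one_re, one_im, hq]
  ring

theorem hasDerivAt_norm_sq_comp_mul_exp {g : ℂ → ℂ} {z₀ : ℂ} (hg : DifferentiableAt ℂ g z₀)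
    (c : ℂ) :
    HasDerivAt (fun t : ℝ => ‖g (z₀ * exp (t * c))‖ ^ 2)
      (2 * (c * (z₀ * deriv g z₀ * conj (g z₀))).re) 0 := by
  have hpath : HasDerivAt (fun t : ℝ => z₀ * exp (t * c)) (z₀ * c) 0 := by
    simpa using (((hasDerivAt_id (0 : ℝ)).ofReal_comp.mul_const c).cexp).const_mul z₀
  have hg' : HasDerivAt g (deriv g z₀) (z₀ * exp ((0 : ℝ) * c)) := by simpa using hg.hasDerivAt
  have hcomp : HasDerivAt (fun t : ℝ => g (z₀ * exp (t * c))) (deriv g z₀ * (z₀ * c)) 0 :=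
    hg'.comp (0 : ℝ) hpath
  convert hcomp.norm_sq using 2
  simp [Complex.inner]
  ring

theorem exists_nonneg_mul_of_isMaxOn_norm {g : ℂ → ℂ} {z₀ : ℂ} (hg : DifferentiableAt ℂ g z₀)
    (hmax : IsMaxOn (‖g ·‖) (closedBall 0 ‖z₀‖) z₀) (hgz₀ : g z₀ ≠ 0) :
    ∃ σ : ℝ, 0 ≤ σ ∧ z₀ * deriv g z₀ = σ * g z₀ := by
  -- `‖g‖²` is maximal at `z₀` along the circle `|z| = |z₀|` (so `q` is real) and along the
  -- radius towards `0` (so `Re q ≥ 0`).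
  set q := z₀ * deriv g z₀ * conj (g z₀) with hq_def
  have hmax_path : ∀ c : ℂ, ∀ t : ℝ, ‖exp (t * c)‖ ≤ 1 →
      ‖g (z₀ * exp (t * c))‖ ^ 2 ≤ ‖g (z₀ * exp ((0 : ℝ) * c))‖ ^ 2 := by
    intro c t ht
    have hmem : z₀ * exp (t * c) ∈ closedBall 0 ‖z₀‖ := by
      rw [mem_closedBall_zero_iff, norm_mul]
      exact mul_le_of_le_one_right (norm_nonneg _) ht
    simpa using pow_le_pow_left₀ (norm_nonneg _) (hmax hmem) 2
  have him : q.im = 0 := by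
    have hloc : IsLocalMax (fun t : ℝ => ‖g (z₀ * exp (t * I))‖ ^ 2) 0 :=
      Filter.Eventually.of_forall fun t => hmax_path I t (by simp [norm_exp_ofReal_mul_I])
    have := hloc.hasDerivAt_eq_zero (hasDerivAt_norm_sq_comp_mul_exp hg I)
    simp [hq_def] at this ⊢
    linarith
  have hre : 0 ≤ q.re := by
    have hloc : IsLocalMaxOn (fun t : ℝ => ‖g (z₀ * exp (t * 1))‖ ^ 2) (Iic 0) 0 :=
      Filter.eventually_of_mem self_mem_nhdsWithin fun t ht =>
        hmax_path 1 t (by simpa [norm_exp] using ht)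
    have hneg : (-1 : ℝ) ∈ posTangentConeAt (Iic (0 : ℝ)) 0 :=
      mem_posTangentConeAt_of_segment_subset (by
        rw [segment_symm, segment_eq_Icc (by norm_num)]; exact Icc_subset_Iic_self)
    have := hloc.hasFDerivWithinAt_nonpos
      (hasDerivAt_norm_sq_comp_mul_exp hg 1).hasFDerivAt.hasFDerivWithinAt hneg
    simp [hq_def] at this ⊢
    linarith
  refine ⟨q.re / ‖g z₀‖ ^ 2, by positivity, ?_⟩
  have hq : (q.re : ℂ) = q := Complex.ext rfl (by simp [him])
  have hnorm : (‖g z₀‖ : ℂ) ≠ 0 := by exact_mod_cast norm_ne_zero_iff.2 hgz₀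
  push_cast
  rw [hq, hq_def, div_mul_eq_mul_div, eq_div_iff (pow_ne_zero 2 hnorm), ← mul_conj']
  ring

-- Jack's lemma.
theorem exists_one_le_mul_of_isMaxOn_norm {w : ℂ → ℂ} {U : Set ℂ} {z₀ : ℂ} (hU : IsOpen U)
    (hw : DifferentiableOn ℂ w U) (hsub : closedBall 0 ‖z₀‖ ⊆ U) (hw0 : w 0 = 0)
    (hmax : IsMaxOn (‖w ·‖) (closedBall 0 ‖z₀‖) z₀) (hwz₀ : w z₀ ≠ 0) :
    ∃ k : ℝ, 1 ≤ k ∧ z₀ * deriv w z₀ = k * w z₀ := by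
  have hr : 0 < ‖z₀‖ := norm_pos_iff.2 fun h => hwz₀ (h ▸ hw0)
  have hz₀U : U ∈ nhds z₀ := hU.mem_nhds (hsub (mem_closedBall_zero_iff.2 le_rfl))
  set g := dslope w 0
  have hwg : w = fun z => z * g z :=
    funext fun z => by simpa [hw0] using (sub_smul_dslope w 0 z).symm
  have hg : DifferentiableOn ℂ g U :=
    (differentiableOn_dslope (hU.mem_nhds (hsub (mem_closedBall_self hr.le)))).2 hw
  have hgz₀ : g z₀ ≠ 0 := fun h => hwz₀ (by rw [hwg]; simp [h])
  have hgmax : IsMaxOn (‖g ·‖) (closedBall 0 ‖z₀‖) z₀ := by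
    intro z hz
    rw [← closure_ball 0 hr.ne'] at hz
    refine Complex.norm_le_of_forall_mem_frontier_norm_le isBounded_ball
      (hg.mono (by rwa [closure_ball 0 hr.ne'])).diffContOnCl (fun ζ hζ => ?_) hz
    rw [frontier_ball 0 hr.ne', mem_sphere_zero_iff_norm] at hζ
    have hle : ‖w ζ‖ ≤ ‖w z₀‖ := hmax (mem_closedBall_zero_iff.2 hζ.le)
    simp only [hwg, norm_mul, hζ] at hle
    exact le_of_mul_le_mul_left hle hr
  obtain ⟨σ, hσ, hgσ⟩ := exists_nonneg_mul_of_isMaxOn_norm (hg.differentiableAt hz₀U) hgmax hgz₀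
  have hderiv : deriv w z₀ = g z₀ + z₀ * deriv g z₀ := by
    rw [hwg]
    simpa using ((hasDerivAt_id' z₀).fun_mul (hg.differentiableAt hz₀U).hasDerivAt).deriv
  refine ⟨1 + σ, by linarith, ?_⟩
  rw [hderiv, hwg]
  push_cast
  linear_combination z₀ * hgσ

-- Jack's lemma for the Cayley transform `(1 - p) / (1 + p)`, which maps `Re p ≥ 0` to the closed
-- unit disc.
theorem exists_mul_deriv_eq_of_re_eq_zero {p : ℂ → ℂ} {s : Set ℂ} {z₀ : ℂ} (hs : IsOpen s)
    (hp : DifferentiableOn ℂ p s) (hsub : closedBall 0 ‖z₀‖ ⊆ s) (hp0 : p 0 = 1)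
    (hre : ∀ z ∈ closedBall 0 ‖z₀‖, 0 ≤ (p z).re) (hz₀ : (p z₀).re = 0) :
    ∃ k : ℝ, 1 ≤ k ∧ z₀ * deriv p z₀ = -k * (1 - p z₀ ^ 2) / 2 := by
  set U := s ∩ {z | -1 < (p z).re}
  have hU : IsOpen U :=
    (continuous_re.comp_continuousOn hp.continuousOn).isOpen_inter_preimage hs isOpen_Ioi
  have hsubU : closedBall 0 ‖z₀‖ ⊆ U := fun z hz =>
    ⟨hsub hz, show -1 < (p z).re by linarith [hre z hz]⟩
  have hz₀U : z₀ ∈ U := hsubU (mem_closedBall_zero_iff.2 le_rfl)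
  have h1p : ∀ z ∈ U, 1 + p z ≠ 0 := fun z hz h => by
    have := congrArg re h
    simp only [add_re, one_re, zero_re] at this
    linarith [show -1 < (p z).re from hz.2]
  set w := fun z => (1 - p z) / (1 + p z)
  have hw : DifferentiableOn ℂ w U :=
    ((differentiableOn_const 1).sub (hp.mono inter_subset_left)).div
      ((differentiableOn_const 1).add (hp.mono inter_subset_left)) h1p
  have hmax : IsMaxOn (‖w ·‖) (closedBall 0 ‖z₀‖) z₀ := fun z hz => by
    change ‖w z‖ ≤ ‖w z₀‖
    rw [norm_div, norm_div, norm_one_sub_eq_norm_one_add hz₀,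
      div_self (norm_ne_zero_iff.2 (h1p z₀ hz₀U))]
    exact div_le_one_of_le₀ (norm_one_sub_le_norm_one_add (hre z hz)) (norm_nonneg _)
  have hwz₀ : w z₀ ≠ 0 := div_ne_zero (fun h => by simpa [hz₀] using congrArg re h) (h1p z₀ hz₀U)
  obtain ⟨k, hk, hwk⟩ :=
    exists_one_le_mul_of_isMaxOn_norm hU hw hsubU (by simp [w, hp0]) hmax hwz₀
  have hderiv : deriv w z₀ = -2 * deriv p z₀ / (1 + p z₀) ^ 2 := by
    have hpd := (hp.differentiableAt (hs.mem_nhds hz₀U.1)).hasDerivAt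
    rw [((hpd.const_sub 1).fun_div (hpd.const_add 1) (h1p z₀ hz₀U)).deriv]
    ring
  refine ⟨k, hk, ?_⟩
  simp only [hderiv, w] at hwk
  field_simp [h1p z₀ hz₀U] at hwk
  linear_combination -hwk / 2

theorem exists_sqrt_three_le_abs_add_div_eq {q c : ℂ} {k : ℝ} (hq : q.re = 0) (hq0 : q ≠ 0)
    (hk : 1 ≤ k) (hc : c = -k * (1 - q ^ 2) / 2) :
    ∃ y : ℝ, √3 ≤ |y| ∧ q + c / q = y * I := by
  set a := q.im
  have hqa : q = a * I := Complex.ext (by simp [hq]) (by simp [a])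
  have ha : a ≠ 0 := fun h => hq0 (by simp [hqa, h])
  refine ⟨(2 * a ^ 2 + k * (1 + a ^ 2)) / (2 * a), ?_, ?_⟩
  · have h3 : √3 ^ 2 = 3 := Real.sq_sqrt (by norm_num)
    have hpos : 0 < |a| := abs_pos.2 ha
    rw [abs_div, abs_of_pos (by positivity : 0 < 2 * a ^ 2 + k * (1 + a ^ 2)), abs_mul, abs_two,
      le_div_iff₀ (by positivity)]
    nlinarith [sq_nonneg (√3 * |a| - 1), sq_abs a]
  · rw [hc, hqa]
    have haC : (a : ℂ) ≠ 0 := ofReal_ne_zero.2 ha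
    push_cast
    field_simp
    ring_nf
    rw [I_sq]
    ring

-- `z f'(z) / f(z)`, written with `dslope` so that it is analytic at `0` when `f 0 = 0`.
noncomputable def starlikeQuotient (f : ℂ → ℂ) (z : ℂ) : ℂ := deriv f z / dslope f 0 z

section

variable {f : ℂ → ℂ} {s : Set ℂ} {z : ℂ}

theorem starlikeQuotient_of_ne (hf0 : f 0 = 0) (hz : z ≠ 0) :
    starlikeQuotient f z = z * deriv f z / f z := by
  rw [starlikeQuotient, dslope_of_ne _ hz, slope_def_field, hf0, sub_zero, sub_zero,
    div_div_eq_mul_div, mul_comm]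

theorem starlikeQuotient_zero (hf : deriv f 0 ≠ 0) : starlikeQuotient f 0 = 1 := by
  rw [starlikeQuotient, dslope_same, div_self hf]

theorem differentiableOn_starlikeQuotient (hs : IsOpen s) (h0 : 0 ∈ s)
    (hf : DifferentiableOn ℂ f s) (hf0 : f 0 = 0) (hfne : ∀ z ∈ s, z ≠ 0 → f z ≠ 0)
    (hf'0 : deriv f 0 ≠ 0) : DifferentiableOn ℂ (starlikeQuotient f) s := by
  refine (hf.analyticOnNhd hs).deriv.differentiableOn.div
    ((differentiableOn_dslope (hs.mem_nhds h0)).2 hf) fun z hz => ?_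
  rcases eq_or_ne z 0 with rfl | hz0
  · rwa [dslope_same]
  · rw [dslope_of_ne _ hz0, slope_def_field, hf0, sub_zero, sub_zero]
    exact div_ne_zero (hfne z hz hz0) hz0

theorem starlikeQuotient_add_mul_deriv_div (hs : IsOpen s) (hf : DifferentiableOn ℂ f s)
    (hf0 : f 0 = 0) (hz : z ∈ s) (hz0 : z ≠ 0) (hfz : f z ≠ 0) (hf'z : deriv f z ≠ 0) :
    starlikeQuotient f z + z * deriv (starlikeQuotient f) z / starlikeQuotient f z =
      1 + z * deriv (deriv f) z / deriv f z := by
  have hf' := (hf.differentiableAt (hs.mem_nhds hz)).hasDerivAt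
  have hf'' := ((hf.analyticOnNhd hs).deriv z hz).differentiableAt.hasDerivAt
  have hderiv : HasDerivAt (starlikeQuotient f)
      (((deriv f z + z * deriv (deriv f) z) * f z - z * deriv f z * deriv f z) / f z ^ 2) z := by
    have hnum : HasDerivAt (fun ζ => ζ * deriv f ζ) (deriv f z + z * deriv (deriv f) z) z := by
      simpa using (hasDerivAt_id' z).fun_mul hf''
    refine (hnum.fun_div hf' hfz).congr_of_eventuallyEq ?_
    filter_upwards [isOpen_ne.mem_nhds hz0] with ζ hζ
    simp [starlikeQuotient_of_ne hf0 hζ]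
  rw [hderiv.deriv, starlikeQuotient_of_ne hf0 hz0]
  field_simp
  ring

end

theorem stmt_2_general (f : ℂ → ℂ) (hanal : DifferentiableOn ℂ f (ball (0 : ℂ) 1))
    (hf0 : f 0 = 0)
    (hfne : ∀ z ∈ ball (0 : ℂ) 1, z ≠ 0 → f z ≠ 0)
    (hf'ne : ∀ z ∈ ball (0 : ℂ) 1, deriv f z ≠ 0)
    (hslit : ∀ z ∈ ball (0 : ℂ) 1, ∀ y : ℝ, Real.sqrt 3 ≤ |y| →
      1 + z * deriv (deriv f) z / deriv f z ≠ y * I) :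
    ∀ z ∈ ball (0 : ℂ) 1, z ≠ 0 → 0 < (z * deriv f z / f z).re := by
  have h0 : (0 : ℂ) ∈ ball (0 : ℂ) 1 := mem_ball_self one_pos
  have hp : DifferentiableOn ℂ (starlikeQuotient f) (ball 0 1) :=
    differentiableOn_starlikeQuotient isOpen_ball h0 hanal hf0 hfne (hf'ne 0 h0)
  have hp0 : starlikeQuotient f 0 = 1 := starlikeQuotient_zero (hf'ne 0 h0)
  intro z hz hz0
  rw [← starlikeQuotient_of_ne hf0 hz0]
  by_contra! hle
  obtain ⟨z₀, hz₀, hre, hnonneg⟩ := exists_eq_zero_forall_mem_closedBall_nonneg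
    (u := fun z => (starlikeQuotient f z).re) (continuous_re.comp_continuousOn hp.continuousOn)
    (by simp [hp0]) hz hle
  have hz₀0 : z₀ ≠ 0 := by rintro rfl; simp [hp0] at hre
  have hfz₀ : f z₀ ≠ 0 := hfne z₀ hz₀ hz₀0
  have hpz₀ : starlikeQuotient f z₀ ≠ 0 := by
    rw [starlikeQuotient_of_ne hf0 hz₀0]
    exact div_ne_zero (mul_ne_zero hz₀0 (hf'ne z₀ hz₀)) hfz₀
  obtain ⟨k, hk, hk_eq⟩ := exists_mul_deriv_eq_of_re_eq_zero isOpen_ball hp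
    (closedBall_subset_ball (mem_ball_zero_iff.1 hz₀)) hp0 hnonneg hre
  obtain ⟨y, hy, hy_eq⟩ := exists_sqrt_three_le_abs_add_div_eq hre hpz₀ hk hk_eq
  refine hslit z₀ hz₀ y hy ?_
  rwa [← starlikeQuotient_add_mul_deriv_div isOpen_ball hanal hf0 hz₀ hz₀0 hfz₀ (hf'ne z₀ hz₀)]

theorem stmt_2 (f : ℂ → ℂ) (hanal : DifferentiableOn ℂ f (ball (0 : ℂ) 1))
    (hf0 : f 0 = 0) (hf'0 : deriv f 0 = 1)
    (hfne : ∀ z ∈ ball (0 : ℂ) 1, z ≠ 0 → f z ≠ 0)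
    (hf'ne : ∀ z ∈ ball (0 : ℂ) 1, deriv f z ≠ 0)
    (hslit : ∀ z ∈ ball (0 : ℂ) 1, ∀ y : ℝ, Real.sqrt 3 ≤ |y| →
      1 + z * deriv (deriv f) z / deriv f z ≠ y * I) :
    ∀ z ∈ ball (0 : ℂ) 1, z ≠ 0 → 0 < (z * deriv f z / f z).re :=
  stmt_2_general f hanal hf0 hfne hf'ne hslit
end

section
/- Let α ∈ [0, 1), λ ∈ [0, π/2), and let p be analytic on the open unit disk 𝔻 with p(0) = 1 and p(z) ≠ α for all z ∈ 𝔻. Suppose that for every z ∈ 𝔻 and every real number A with |A| ≥ sec λ · √(1 + 2 cos λ) − tan λ one has e^{−iλ}·(p(z) − α)/(1 − α) + z p′(z)/(p(z) − α) ≠ iA. Then Re(e^{−iλ} p(z)) > α cos λ for all z ∈ 𝔻. -/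
open Complex ComplexConjugate Metric Set

/-!
Put `q = e^{-iλ} (p - α) / (1 - α)`, so that `q(0) = e^{-iλ}` has positive real part and the claim
is `Re q > 0` on the disc. If this fails, take a point `z₀` of least modulus with `Re q(z₀) ≤ 0`;
then `Re q(z₀) = 0` and `Re q ≥ 0` on the closed disc of radius `|z₀|`. Jack's lemma, applied to
the Cayley transform `w = (a - q) / (ā + q)`, gives `z₀ q'(z₀) = -k |a - q(z₀)|² / (2 Re a)` with
`k ≥ 1` (Miller–Mocanu). Writing `q(z₀) = iρ`, the value `q + z q' / q` at `z₀` is `iA` with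
`|A| ≥ sec λ √(1 + 2 cos λ) - tan λ`, contradicting the hypothesis.
-/

theorem exists_eq_zero_and_mapsTo_closedBall_Ici {E : Type*} [NormedAddCommGroup E]
    [NormedSpace ℝ E] [ProperSpace E] {f : E → ℝ} {R : ℝ} {z₁ : E} (hf : ContinuousOn f (ball 0 R))
    (h0 : 0 < f 0) (hz₁ : z₁ ∈ ball 0 R) (hfz₁ : f z₁ ≤ 0) :
    ∃ z₀ ∈ ball 0 R, f z₀ = 0 ∧ MapsTo f (closedBall 0 ‖z₀‖) (Ici 0) := by
  have hsub : ∀ {r}, r ≤ ‖z₁‖ → closedBall (0 : E) r ⊆ ball 0 R := fun hr =>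
    closedBall_subset_ball (hr.trans_lt (mem_ball_zero_iff.1 hz₁))
  set K := closedBall (0 : E) ‖z₁‖ ∩ f ⁻¹' Iic 0
  have hK : IsCompact K := (isCompact_closedBall _ _).of_isClosed_subset
    ((hf.mono (hsub le_rfl)).preimage_isClosed_of_isClosed isClosed_closedBall isClosed_Iic)
    inter_subset_left
  obtain ⟨z₀, ⟨hz₀₁, hfz₀⟩, hmin⟩ :=
    hK.exists_isMinOn ⟨z₁, mem_closedBall_zero_iff.2 le_rfl, hfz₁⟩ continuous_norm.continuousOn
  have hle : ‖z₀‖ ≤ ‖z₁‖ := mem_closedBall_zero_iff.1 hz₀₁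
  have hz₀ : z₀ ≠ 0 := by rintro rfl; exact (lt_of_le_of_lt hfz₀ h0).false
  have hpos : MapsTo f (ball 0 ‖z₀‖) (Ici 0) := fun z hz => by
    rw [mem_Ici]
    by_contra! hfz
    have hzK : z ∈ K := ⟨mem_closedBall_zero_iff.2 ((mem_ball_zero_iff.1 hz).le.trans hle), hfz.le⟩
    exact (mem_ball_zero_iff.1 hz).not_ge (hmin hzK)
  have hclosure := closure_ball (0 : E) (norm_ne_zero_iff.2 hz₀)
  have hnonneg := hpos.closure_of_continuousOn (hf.mono (hclosure ▸ hsub hle))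
  rw [hclosure, closure_Ici] at hnonneg
  exact ⟨z₀, hsub hle (mem_closedBall_zero_iff.2 le_rfl),
    le_antisymm hfz₀ (hnonneg (mem_closedBall_zero_iff.2 le_rfl)), hnonneg⟩

section Jack

variable {w : ℂ → ℂ} {w' z₀ : ℂ}

lemma one_le_re_mul_conj_of_norm_eq_one (hd : DifferentiableOn ℂ w (ball 0 ‖z₀‖))
    (hmaps : MapsTo w (closedBall 0 ‖z₀‖) (closedBall 0 1)) (h0 : w 0 = 0)
    (hw' : HasDerivAt w w' z₀) (h1 : ‖w z₀‖ = 1) :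
    1 ≤ (w' * z₀ * conj (w z₀)).re := by
  have hz₀ : 0 < ‖z₀‖ := norm_pos_iff.2 (by rintro rfl; simp [h0] at h1)
  set φ : ℝ → ℝ := fun t => ‖w (t * z₀)‖ ^ 2 - t ^ 2
  have hφ' : HasDerivAt φ (2 * (w' * z₀ * conj (w z₀)).re - 2) 1 := by
    have hline : HasDerivAt (fun t : ℝ => (t : ℂ) * z₀) z₀ 1 := by
      simpa using (hasDerivAt_id (1 : ℝ)).ofReal_comp.mul_const z₀
    refine ((hw'.comp_of_eq (1 : ℝ) hline (by simp)).norm_sq.sub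
      (hasDerivAt_pow 2 (1 : ℝ))).congr_deriv ?_
    simp only [Function.comp_apply, ofReal_one, one_mul, Complex.inner]
    norm_num
  -- Schwarz's lemma gives `‖w (t z₀)‖ ≤ t` on the radius `[0, z₀]`.
  have hmax : IsMaxOn φ (Icc 0 1) 1 := by
    intro t ⟨ht0, ht1⟩
    simp only [mem_ofPred_eq, φ, ofReal_one, one_mul, h1]
    rcases ht1.lt_or_eq with ht1 | rfl
    · have hmem : (t : ℂ) * z₀ ∈ ball 0 ‖z₀‖ := by
        rw [mem_ball_zero_iff, norm_mul, norm_real, Real.norm_of_nonneg ht0]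
        exact mul_lt_of_lt_one_left hz₀ ht1
      have := Complex.dist_le_div_mul_dist_of_mapsTo_ball hd
        (by rw [h0]; exact hmaps.mono_left ball_subset_closedBall) hmem
      rw [h0, dist_zero_right, dist_zero_right, norm_mul, norm_real, Real.norm_of_nonneg ht0,
        show 1 / ‖z₀‖ * (t * ‖z₀‖) = t by field_simp] at this
      nlinarith [norm_nonneg (w (t * z₀))]
    · simp [h1]
  have hdir : (-1 : ℝ) ∈ posTangentConeAt (Icc 0 1) 1 :=
    mem_posTangentConeAt_of_segment_subset (by norm_num [segment_symm, segment_eq_Icc])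
  have := hmax.localize.hasFDerivWithinAt_nonpos hφ'.hasFDerivAt.hasFDerivWithinAt hdir
  simp only [ContinuousLinearMap.toSpanSingleton_apply, smul_eq_mul] at this
  linarith

lemma im_mul_conj_eq_zero_of_norm_eq_one
    (hmaps : MapsTo w (closedBall 0 ‖z₀‖) (closedBall 0 1))
    (hw' : HasDerivAt w w' z₀) (h1 : ‖w z₀‖ = 1) :
    (w' * z₀ * conj (w z₀)).im = 0 := by
  set χ : ℝ → ℝ := fun θ => ‖w (exp (θ * I) * z₀)‖ ^ 2
  have hχ' : HasDerivAt χ (-2 * (w' * z₀ * conj (w z₀)).im) 0 := by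
    have hrot : HasDerivAt (fun θ : ℝ => exp (θ * I) * z₀) (I * z₀) 0 := by
      simpa using ((hasDerivAt_id (0 : ℝ)).ofReal_comp.mul_const I).cexp.mul_const z₀
    refine (hw'.comp_of_eq (0 : ℝ) hrot (by simp)).norm_sq.congr_deriv ?_
    rw [Complex.inner, show w' * (I * z₀) = I * (w' * z₀) by ring, mul_assoc, I_mul_re]
    simp only [Function.comp_apply, ofReal_zero, zero_mul, exp_zero, one_mul, mul_assoc]
    ring
  have hmax : IsLocalMax χ 0 := Filter.Eventually.of_forall fun θ => by
    have hmem : exp (θ * I) * z₀ ∈ closedBall 0 ‖z₀‖ := by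
      simp [norm_exp_ofReal_mul_I]
    simpa [χ, h1] using hmaps hmem
  linarith [hmax.hasDerivAt_eq_zero hχ']

theorem jack_lemma (hd : DifferentiableOn ℂ w (ball 0 ‖z₀‖))
    (hmaps : MapsTo w (closedBall 0 ‖z₀‖) (closedBall 0 1)) (h0 : w 0 = 0)
    (hw' : HasDerivAt w w' z₀) (h1 : ‖w z₀‖ = 1) :
    ∃ k : ℝ, 1 ≤ k ∧ z₀ * w' = k * w z₀ := by
  refine ⟨(w' * z₀ * conj (w z₀)).re, one_le_re_mul_conj_of_norm_eq_one hd hmaps h0 hw' h1, ?_⟩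
  have hreal : ((w' * z₀ * conj (w z₀)).re : ℂ) = w' * z₀ * conj (w z₀) :=
    ext rfl (by simp [im_mul_conj_eq_zero_of_norm_eq_one hmaps hw' h1])
  rw [hreal, mul_assoc, conj_mul', h1]
  simp [mul_comm]

end Jack

lemma normSq_conj_add_sub_normSq_sub (a u : ℂ) :
    normSq (conj a + u) - normSq (a - u) = 4 * a.re * u.re := by
  simp only [normSq_apply, add_re, add_im, sub_re, sub_im, conj_re, conj_im]
  ring

lemma norm_cayley_le_one {a u : ℂ} (ha : 0 < a.re) (hu : 0 ≤ u.re) :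
    ‖(a - u) / (conj a + u)‖ ≤ 1 := by
  rw [norm_div]
  refine div_le_one_of_le₀ ?_ (norm_nonneg _)
  rw [norm_def, norm_def]
  exact Real.sqrt_le_sqrt (by nlinarith [normSq_conj_add_sub_normSq_sub a u])

lemma conj_add_eq_conj_sub {a u : ℂ} (hu : u.re = 0) : conj a + u = conj (a - u) := by
  apply Complex.ext <;> simp [hu]

lemma norm_cayley_eq_one {a u : ℂ} (ha : 0 < a.re) (hu : u.re = 0) :
    ‖(a - u) / (conj a + u)‖ = 1 := by
  have : a - u ≠ 0 := fun h => by simpa [hu, ha.ne'] using congrArg re h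
  rw [conj_add_eq_conj_sub hu, norm_div, norm_conj, div_self (norm_ne_zero_iff.2 this)]

theorem exists_one_le_mul_deriv_eq_of_re_eq_zero {a z₀ : ℂ} {q : ℂ → ℂ} (ha : 0 < a.re)
    (hq : DifferentiableOn ℂ q (ball 0 1)) (hq0 : q 0 = a) (hz₀ : z₀ ∈ ball 0 1)
    (hre : (q z₀).re = 0) (hnonneg : MapsTo (fun z => (q z).re) (closedBall 0 ‖z₀‖) (Ici 0)) :
    ∃ k : ℝ, 1 ≤ k ∧ z₀ * deriv q z₀ = ((-(k * normSq (a - q z₀) / (2 * a.re)) : ℝ) : ℂ) := by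
  have hden : ∀ u : ℂ, 0 ≤ u.re → conj a + u ≠ 0 := fun u hu h => by
    have := congrArg re h
    simp only [add_re, conj_re, zero_re] at this
    linarith
  have hball : closedBall (0 : ℂ) ‖z₀‖ ⊆ ball 0 1 :=
    closedBall_subset_ball (mem_ball_zero_iff.1 hz₀)
  -- the Cayley transform maps `{Re ≥ 0}` into the closed unit disc, `{Re = 0}` onto its boundary
  set w : ℂ → ℂ := fun z => (a - q z) / (conj a + q z)
  set q' := deriv q z₀
  have hd : DifferentiableOn ℂ w (ball 0 ‖z₀‖) := by
    have hq₀ := hq.mono (ball_subset_closedBall.trans hball)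
    exact ((differentiableOn_const a).sub hq₀).div ((differentiableOn_const _).add hq₀)
      fun z hz => hden _ (hnonneg (ball_subset_closedBall hz))
  have hmaps : MapsTo w (closedBall 0 ‖z₀‖) (closedBall 0 1) := fun z hz =>
    mem_closedBall_zero_iff.2 (norm_cayley_le_one ha (hnonneg hz))
  have hw' : HasDerivAt w (-(2 * a.re) * q' / (conj a + q z₀) ^ 2) z₀ := by
    have hq' : HasDerivAt q q' z₀ := (hq.differentiableAt (isOpen_ball.mem_nhds hz₀)).hasDerivAt
    refine (((hasDerivAt_const z₀ a).sub hq').div ((hasDerivAt_const z₀ (conj a)).add hq')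
      (hden _ hre.ge)).congr_deriv ?_
    have h2re : (2 * a.re : ℂ) = conj a + a := by rw [add_comm, add_conj]; push_cast; ring
    simp only [Pi.add_apply, Pi.sub_apply, h2re]
    ring
  obtain ⟨k, hk, hkw⟩ := jack_lemma hd hmaps (by simp [w, hq0]) hw' (norm_cayley_eq_one ha hre)
  refine ⟨k, hk, ?_⟩
  have hD := hden _ hre.ge
  have hND : (a - q z₀) * (conj a + q z₀) = normSq (a - q z₀) := by
    rw [conj_add_eq_conj_sub hre, mul_conj]
  have ha' : (a.re : ℂ) ≠ 0 := ofReal_ne_zero.2 ha.ne'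
  simp only [w] at hkw
  field_simp at hkw
  push_cast
  field_simp
  linear_combination (-1) * hkw - k * hND

theorem re_pos_of_forall_not_mem {a : ℂ} {q : ℂ → ℂ} {S : Set (ℂ × ℂ)} (ha : 0 < a.re)
    (hq : DifferentiableOn ℂ q (ball 0 1)) (hq0 : q 0 = a)
    (hS : ∀ ρ k : ℝ, 1 ≤ k →
      ((ρ * I : ℂ), ((-(k * normSq (a - ρ * I) / (2 * a.re)) : ℝ) : ℂ)) ∈ S)
    (hqS : ∀ z ∈ ball 0 1, (q z, z * deriv q z) ∉ S) :
    ∀ z ∈ ball 0 1, 0 < (q z).re := by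
  intro z hz
  by_contra! hz'
  obtain ⟨z₀, hz₀, hre, hnonneg⟩ :=
    exists_eq_zero_and_mapsTo_closedBall_Ici (f := fun z => (q z).re)
      (continuous_re.comp_continuousOn hq.continuousOn) (by simpa [hq0] using ha) hz hz'
  obtain ⟨k, hk, hkz⟩ := exists_one_le_mul_deriv_eq_of_re_eq_zero ha hq hq0 hz₀ hre hnonneg
  have hqz₀ : q z₀ = (q z₀).im * I := by apply Complex.ext <;> simp [hre]
  apply hqS z₀ hz₀
  rw [hkz, hqz₀]
  exact hS _ k hk

lemma le_abs_add_div_of_one_le {c s ρ k : ℝ} (hc : 0 < c) (hs : 0 ≤ s) (hs1 : s ≤ 1)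
    (hρ : ρ ≠ 0) (hk : 1 ≤ k) :
    c⁻¹ * √(1 + 2 * c) - s / c ≤ |ρ + k * (1 + 2 * s * ρ + ρ ^ 2) / (2 * c * ρ)| := by
  set R := √(1 + 2 * c)
  have hR : R ^ 2 = 1 + 2 * c := Real.sq_sqrt (by linarith)
  set P := 1 + 2 * s * ρ + ρ ^ 2
  have hP : 0 ≤ P := by nlinarith [sq_nonneg (ρ + s)]
  have hρ' : 0 < |ρ| := abs_pos.2 hρ
  have hnum : 0 ≤ 2 * c * ρ ^ 2 + k * P := by positivity
  calc c⁻¹ * R - s / c = 2 * |ρ| * (R - s) / (2 * c * |ρ|) := by field_simp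
    _ ≤ (2 * c * ρ ^ 2 + k * P) / (2 * c * |ρ|) := by
        gcongr
        -- `2 c ρ² + P - 2|ρ| (R - s) = (R |ρ| - 1)² + 2 s (ρ + |ρ|)`
        nlinarith [sq_nonneg (R * |ρ| - 1), sq_abs ρ, mul_le_mul_of_nonneg_right hk hP,
          mul_nonneg hs (by linarith [neg_abs_le ρ] : 0 ≤ ρ + |ρ|)]
    _ = |ρ + k * P / (2 * c * ρ)| := by
        rw [show ρ + k * P / (2 * c * ρ) = (2 * c * ρ ^ 2 + k * P) / (2 * c * ρ) by field_simp,
          abs_div, abs_of_nonneg hnum, abs_mul, abs_of_pos (by positivity : (0 : ℝ) < 2 * c)]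

lemma ofReal_mul_I_add_div (ρ σ : ℝ) : (ρ * I : ℂ) + σ / (ρ * I) = ((ρ - σ / ρ : ℝ) : ℂ) * I := by
  rcases eq_or_ne ρ 0 with rfl | hρ
  · simp
  · have : (ρ : ℂ) ≠ 0 := ofReal_ne_zero.2 hρ
    push_cast
    field_simp
    linear_combination (σ : ℂ) * I_sq

lemma exp_neg_mul_I_re (lam : ℝ) : (exp (-lam * I)).re = Real.cos lam := by
  rw [← ofReal_neg, exp_ofReal_mul_I_re, Real.cos_neg]

lemma normSq_exp_neg_mul_I_sub (lam ρ : ℝ) :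
    normSq (exp (-lam * I) - ρ * I) = 1 + 2 * Real.sin lam * ρ + ρ ^ 2 := by
  rw [← ofReal_neg, normSq_apply]
  simp only [sub_re, sub_im, exp_ofReal_mul_I_re, exp_ofReal_mul_I_im, mul_re, mul_im, ofReal_re,
    ofReal_im, I_re, I_im, Real.cos_neg, Real.sin_neg]
  nlinarith [Real.sin_sq_add_cos_sq lam]

/-- Pairs `(q z, z * q' z)` excluded by the hypothesis: `q + z q' / q` lies on the slits
`{iA : B ≤ |A|}`, or `q` vanishes. -/
def slitPairs (B : ℝ) : Set (ℂ × ℂ) := {x | x.1 = 0 ∨ ∃ A : ℝ, B ≤ |A| ∧ x.1 + x.2 / x.1 = A * I}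

lemma mem_slitPairs_of_one_le {lam ρ k : ℝ} (hcos : 0 < Real.cos lam) (hsin : 0 ≤ Real.sin lam)
    (hk : 1 ≤ k) :
    ((ρ * I : ℂ), ((-(k * normSq (exp (-lam * I) - ρ * I) / (2 * (exp (-lam * I)).re)) : ℝ) : ℂ))
      ∈ slitPairs ((Real.cos lam)⁻¹ * √(1 + 2 * Real.cos lam) - Real.tan lam) := by
  rcases eq_or_ne ρ 0 with rfl | hρ
  · left
    simp
  · right
    refine ⟨_, ?_, ofReal_mul_I_add_div _ _⟩
    rw [normSq_exp_neg_mul_I_sub, exp_neg_mul_I_re, Real.tan_eq_sin_div_cos]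
    convert le_abs_add_div_of_one_le hcos hsin (Real.sin_le_one lam) hρ hk using 2
    field_simp
    ring

theorem re_pos_of_add_mul_deriv_div_ne_mul_I {lam : ℝ} {q : ℂ → ℂ} (hcos : 0 < Real.cos lam)
    (hsin : 0 ≤ Real.sin lam) (hq : DifferentiableOn ℂ q (ball 0 1)) (hq0 : q 0 = exp (-lam * I))
    (hne : ∀ z ∈ ball (0 : ℂ) 1, q z ≠ 0)
    (hslit : ∀ z ∈ ball (0 : ℂ) 1, ∀ A : ℝ,
      (Real.cos lam)⁻¹ * √(1 + 2 * Real.cos lam) - Real.tan lam ≤ |A| →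
      q z + z * deriv q z / q z ≠ A * I) :
    ∀ z ∈ ball (0 : ℂ) 1, 0 < (q z).re := by
  refine re_pos_of_forall_not_mem (exp_neg_mul_I_re lam ▸ hcos) hq hq0
    (fun ρ k hk => mem_slitPairs_of_one_le hcos hsin hk) ?_
  rintro z hz (h | ⟨A, hA, hAeq⟩)
  exacts [hne z hz h, hslit z hz A hA hAeq]

lemma re_mul_sub_div_one_sub (a w : ℂ) (α : ℝ) :
    (a * ((w - α) / (1 - α))).re = ((a * w).re - α * a.re) / (1 - α) := by
  rw [show a * ((w - α) / (1 - α)) = (a * w - α * a) / ((1 - α : ℝ) : ℂ) by push_cast; ring,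
    div_ofReal_re, sub_re, re_ofReal_mul]

theorem stmt_4 (α lam : ℝ) (hα : α ∈ Set.Ico (0 : ℝ) 1)
    (hlam : lam ∈ Set.Ico (0 : ℝ) (Real.pi / 2))
    (p : ℂ → ℂ) (hanal : DifferentiableOn ℂ p (ball (0 : ℂ) 1))
    (hp0 : p 0 = 1) (hne : ∀ z ∈ ball (0 : ℂ) 1, p z ≠ (α : ℂ))
    (hslit : ∀ z ∈ ball (0 : ℂ) 1, ∀ A : ℝ,
      (Real.cos lam)⁻¹ * Real.sqrt (1 + 2 * Real.cos lam) - Real.tan lam ≤ |A| →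
      Complex.exp (-(lam : ℂ) * I) * ((p z - (α : ℂ)) / (1 - (α : ℂ))) +
        z * deriv p z / (p z - (α : ℂ)) ≠ A * I) :
    ∀ z ∈ ball (0 : ℂ) 1, α * Real.cos lam < (Complex.exp (-(lam : ℂ) * I) * p z).re := by
  have hcos : 0 < Real.cos lam :=
    Real.cos_pos_of_mem_Ioo ⟨by linarith [hlam.1, Real.pi_pos], hlam.2⟩
  have hsin : 0 ≤ Real.sin lam :=
    Real.sin_nonneg_of_nonneg_of_le_pi hlam.1 (by linarith [hlam.2, Real.pi_pos])
  have hα1 : 0 < 1 - α := sub_pos.2 hα.2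
  have hα1' : (1 - α : ℂ) ≠ 0 := by exact_mod_cast hα1.ne'
  set q : ℂ → ℂ := fun z => exp (-(lam : ℂ) * I) * ((p z - α) / (1 - α))
  have hq : ∀ z ∈ ball (0 : ℂ) 1,
      HasDerivAt q (exp (-(lam : ℂ) * I) * (deriv p z / (1 - α))) z := fun z hz =>
    ((hanal.differentiableAt (isOpen_ball.mem_nhds hz)).hasDerivAt.sub_const _).div_const _
      |>.const_mul _
  have hq_ne : ∀ z ∈ ball (0 : ℂ) 1, q z ≠ 0 := fun z hz =>
    mul_ne_zero (exp_ne_zero _) (div_ne_zero (sub_ne_zero.2 (hne z hz)) hα1')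
  have hlogDeriv : ∀ z ∈ ball (0 : ℂ) 1, z * deriv q z / q z = z * deriv p z / (p z - α) :=
    fun z hz => by
      have : p z - α ≠ 0 := sub_ne_zero.2 (hne z hz)
      rw [(hq z hz).deriv]
      simp only [q]
      field_simp [exp_ne_zero]
  intro z hz
  have hpos := re_pos_of_add_mul_deriv_div_ne_mul_I hcos hsin
    (fun z hz => (hq z hz).differentiableAt.differentiableWithinAt)
    (by simp only [q, hp0, div_self hα1', mul_one]) hq_ne
    (fun z hz A hA => hlogDeriv z hz ▸ hslit z hz A hA) z hz
  rw [re_mul_sub_div_one_sub, exp_neg_mul_I_re, div_pos_iff_of_pos_right hα1] at hpos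
  linarith
end

section
/- Let 0 < λ ≤ 1 and 0 < α ≤ 1. Let f be analytic on the open unit disk 𝔻 with f(0) = 0 and f′(0) = 1, suppose Re(f(z)/z) > 0 for all z ∈ 𝔻 \ {0} (with f(z)/z → 1 as z → 0), and suppose |f′(z)·(z/f(z))^{α+1} − 1| < λ for all z ∈ 𝔻 \ {0}, where z/f(z) = 1/(f(z)/z) and the power is the principal branch. Set R_{λ,α} = ( −(λ + 2(α+1)) + √(λ² + 8λ + 4αλ + 4α² + 8α + 8) ) / (2(λ+1)). Then for every z with |z| < R_{λ,α}, f′(z) ≠ 0 and Re(1 + z f″(z)/f′(z)) > 0; that is, f is convex in |z| < R_{λ,α}. -/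
/-!
Write `f z / z = p z`, so `Re p > 0`, and `f' = g * p ^ (α + 1)`, so that the hypothesis says
`‖g - 1‖ < λ` with `g 0 = 1`. Then `z f'' / f' = z g' / g + (α + 1) z p' / p`. Schwarz–Pick
(applied to the Cayley transform of `p`, and to `(g - 1) / λ` together with Schwarz's bound
`‖g z - 1‖ ≤ λ ‖z‖`) gives `‖z p' / p‖ ≤ 2r / (1 - r²)` and `‖z g' / g‖ ≤ λ r / (1 - r)` for
`‖z‖ = r`. Hence `Re (1 + z f'' / f') ≥ 1 - λ r / (1 - r) - 2 (α + 1) r / (1 - r²)`, which is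
positive exactly when `(1 + λ) r² + (λ + 2α + 2) r < 1`, i.e. `r < R_{λ,α}`.
-/

open Complex Metric Set ComplexConjugate

noncomputable def diskMobius (a w : ℂ) : ℂ := (w + a) / (1 + conj a * w)

section diskMobius

variable {a w : ℂ}

lemma normSq_one_add_conj_mul_sub_normSq_add (a w : ℂ) :
    normSq (1 + conj a * w) - normSq (w + a) = (1 - normSq a) * (1 - normSq w) := by
  simp only [normSq_apply, add_re, add_im, mul_re, mul_im, one_re, one_im, conj_re, conj_im]
  ring

lemma one_add_conj_mul_ne_zero (ha : ‖a‖ < 1) (hw : ‖w‖ < 1) : 1 + conj a * w ≠ 0 := by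
  intro h
  have : conj a * w = -1 := by linear_combination h
  have hlt : ‖conj a * w‖ < 1 := by
    rw [norm_mul, norm_conj]
    nlinarith [norm_nonneg a, norm_nonneg w]
  simp [this] at hlt

lemma norm_diskMobius_lt_one (ha : ‖a‖ < 1) (hw : ‖w‖ < 1) : ‖diskMobius a w‖ < 1 := by
  have hden := one_add_conj_mul_ne_zero ha hw
  rw [diskMobius, norm_div, div_lt_one (norm_pos_iff.2 hden), ← sq_lt_sq₀ (norm_nonneg _)
    (norm_nonneg _), ← normSq_eq_norm_sq, ← normSq_eq_norm_sq, ← sub_pos,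
    normSq_one_add_conj_mul_sub_normSq_add, normSq_eq_norm_sq, normSq_eq_norm_sq]
  have := pow_lt_one₀ (norm_nonneg a) ha two_ne_zero
  have := pow_lt_one₀ (norm_nonneg w) hw two_ne_zero
  nlinarith

lemma hasDerivAt_diskMobius (hden : 1 + conj a * w ≠ 0) :
    HasDerivAt (diskMobius a) ((1 - normSq a) / (1 + conj a * w) ^ 2) w := by
  have hnum : HasDerivAt (fun v => v + a) 1 w := (hasDerivAt_id w).add_const a
  have hden' : HasDerivAt (fun v => 1 + conj a * v) (conj a) w := by
    simpa using ((hasDerivAt_id w).const_mul (conj a)).const_add 1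
  refine (hnum.div hden' hden).congr_deriv ?_
  rw [← mul_conj]
  ring

end diskMobius

lemma norm_deriv_mul_le_of_mapsTo_ball {ω : ℂ → ℂ} (hd : DifferentiableOn ℂ ω (ball 0 1))
    (hm : MapsTo ω (ball 0 1) (ball 0 1)) {z : ℂ} (hz : ‖z‖ < 1) :
    ‖deriv ω z‖ * (1 - ‖z‖ ^ 2) ≤ 1 - ‖ω z‖ ^ 2 := by
  set b := ω z
  have hb : ‖b‖ < 1 := mem_ball_zero_iff.1 (hm (mem_ball_zero_iff.2 hz))
  have hb' : ‖-b‖ < 1 := by rwa [norm_neg]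
  -- Schwarz's lemma for `F`, which fixes `0`, gives Schwarz–Pick at `z`.
  set F := diskMobius (-b) ∘ ω ∘ diskMobius z
  have hmob : ∀ {a}, ‖a‖ < 1 → MapsTo (diskMobius a) (ball 0 1) (ball 0 1) := fun ha _ hv =>
    mem_ball_zero_iff.2 (norm_diskMobius_lt_one ha (mem_ball_zero_iff.1 hv))
  have hmobd : ∀ {a v}, ‖a‖ < 1 → ‖v‖ < 1 → DifferentiableAt ℂ (diskMobius a) v := fun ha hv =>
    (hasDerivAt_diskMobius (one_add_conj_mul_ne_zero ha hv)).differentiableAt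
  have hFm : MapsTo F (ball 0 1) (ball 0 1) := (hmob hb').comp (hm.comp (hmob hz))
  have hFd : DifferentiableOn ℂ F (ball 0 1) := fun v hv =>
    ((hmobd hb' (mem_ball_zero_iff.1 (hm (hmob hz hv)))).comp v
      ((hd.differentiableAt (isOpen_ball.mem_nhds (hmob hz hv))).comp v
        (hmobd hz (mem_ball_zero_iff.1 hv)))).differentiableWithinAt
  have hF0 : F 0 = 0 := by simp [F, diskMobius, b]
  have hB : 0 < 1 - ‖b‖ ^ 2 := by nlinarith [norm_nonneg b]
  have hZ : 0 < 1 - ‖z‖ ^ 2 := by nlinarith [norm_nonneg z]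
  have hF' : HasDerivAt F (((1 - ‖b‖ ^ 2 : ℝ) : ℂ)⁻¹ * (deriv ω z * (1 - ‖z‖ ^ 2 : ℝ))) 0 := by
    have hz' := hasDerivAt_diskMobius (a := z) (w := 0) (by simp)
    have hz0 : diskMobius z 0 = z := by simp [diskMobius]
    have hb'' : HasDerivAt (diskMobius (-b))
        ((1 - normSq (-b)) / (1 + conj (-b) * b) ^ 2) ((ω ∘ diskMobius z) 0) := by
      rw [Function.comp_apply, hz0]
      exact hasDerivAt_diskMobius (one_add_conj_mul_ne_zero hb' hb)
    have hω : HasDerivAt ω (deriv ω z) (diskMobius z 0) := by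
      rw [hz0]; exact (hd.differentiableAt (isOpen_ball.mem_nhds (by simpa))).hasDerivAt
    refine (hb''.comp 0 (hω.comp 0 hz')).congr_deriv ?_
    have hnb : (1 : ℂ) + conj (-b) * b = ((1 - ‖b‖ ^ 2 : ℝ) : ℂ) := by
      rw [map_neg, neg_mul, mul_comm, mul_conj, normSq_eq_norm_sq]
      push_cast; ring
    have hB' : ((1 - ‖b‖ ^ 2 : ℝ) : ℂ) ≠ 0 := ofReal_ne_zero.2 hB.ne'
    rw [hnb, normSq_neg, normSq_eq_norm_sq, normSq_eq_norm_sq]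
    field_simp
    push_cast
    ring
  have hbound := norm_deriv_le_div_of_mapsTo_ball hFd
    (by rw [hF0]; exact hFm.mono_right ball_subset_closedBall) one_pos
  rw [hF'.deriv, norm_mul, norm_mul, norm_inv, norm_real, norm_real, Real.norm_of_nonneg hB.le,
    Real.norm_of_nonneg hZ.le, div_one, inv_mul_le_iff₀ hB, mul_one] at hbound
  exact hbound

lemma normSq_add_one_sub_normSq_sub_one (w : ℂ) : normSq (w + 1) - normSq (w - 1) = 4 * w.re := by
  simp only [normSq_apply, add_re, add_im, sub_re, sub_im, one_re, one_im]
  ring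

lemma add_one_ne_zero_of_re_pos {w : ℂ} (hw : 0 < w.re) : w + 1 ≠ 0 := by
  intro h
  have := congrArg re h
  simp only [add_re, one_re, zero_re] at this
  linarith

lemma norm_deriv_mul_le_two_mul_re {p : ℂ → ℂ} (hd : DifferentiableOn ℂ p (ball 0 1))
    (hre : MapsTo p (ball 0 1) {w | 0 < w.re}) {z : ℂ} (hz : ‖z‖ < 1) :
    ‖deriv p z‖ * (1 - ‖z‖ ^ 2) ≤ 2 * (p z).re := by
  have hne : ∀ w ∈ ball (0 : ℂ) 1, p w + 1 ≠ 0 := fun w hw => add_one_ne_zero_of_re_pos (hre hw)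
  have hz' : z ∈ ball (0 : ℂ) 1 := mem_ball_zero_iff.2 hz
  have hpd : ∀ w ∈ ball (0 : ℂ) 1, HasDerivAt p (deriv p w) w := fun w hw =>
    (hd.differentiableAt (isOpen_ball.mem_nhds hw)).hasDerivAt
  set ω := fun w => (p w - 1) / (p w + 1)
  have hωm : MapsTo ω (ball 0 1) (ball 0 1) := fun w hw => by
    have h := normSq_add_one_sub_normSq_sub_one (p w)
    have : 0 < (p w).re := hre hw
    rw [mem_ball_zero_iff, norm_div, div_lt_one (norm_pos_iff.2 (hne w hw)),
      ← sq_lt_sq₀ (norm_nonneg _) (norm_nonneg _), ← normSq_eq_norm_sq, ← normSq_eq_norm_sq]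
    linarith
  have hω' : ∀ w ∈ ball (0 : ℂ) 1, HasDerivAt ω (2 * deriv p w / (p w + 1) ^ 2) w := fun w hw =>
    (((hpd w hw).sub_const 1).div ((hpd w hw).add_const 1) (hne w hw)).congr_deriv (by ring)
  have hpick := norm_deriv_mul_le_of_mapsTo_ball
    (fun w hw => (hω' w hw).differentiableAt.differentiableWithinAt) hωm hz
  rw [(hω' z hz').deriv] at hpick
  have hC : 0 < ‖p z + 1‖ ^ 2 := by have := norm_pos_iff.2 (hne z hz'); positivity
  have h := normSq_add_one_sub_normSq_sub_one (p z)
  rw [normSq_eq_norm_sq, normSq_eq_norm_sq] at h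
  simp only [ω, norm_div, norm_mul, norm_pow, Complex.norm_two, div_pow] at hpick
  rw [div_mul_eq_mul_div, div_le_iff₀ hC, sub_mul, div_mul_cancel₀ _ hC.ne'] at hpick
  linarith

lemma norm_mul_logDeriv_le_of_re_pos {p : ℂ → ℂ} (hd : DifferentiableOn ℂ p (ball 0 1))
    (hre : MapsTo p (ball 0 1) {w | 0 < w.re}) {z : ℂ} (hz : ‖z‖ < 1) :
    ‖z * logDeriv p z‖ ≤ 2 * ‖z‖ / (1 - ‖z‖ ^ 2) := by
  have hZ : 0 < 1 - ‖z‖ ^ 2 := by nlinarith [norm_nonneg z]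
  have hp : 0 < (p z).re := hre (mem_ball_zero_iff.2 hz)
  have hP : 0 < ‖p z‖ := hp.trans_le (re_le_norm _)
  have hcar := norm_deriv_mul_le_two_mul_re hd hre hz
  have hq : ‖deriv p z‖ / ‖p z‖ ≤ 2 / (1 - ‖z‖ ^ 2) := by
    rw [div_le_div_iff₀ hP hZ]
    linarith [re_le_norm (p z)]
  rw [logDeriv_apply, norm_mul, norm_div]
  exact (mul_le_mul_of_nonneg_left hq (norm_nonneg z)).trans_eq (by ring)

lemma norm_mul_logDeriv_le_of_mapsTo_ball_one {g : ℂ → ℂ} {lam : ℝ} (hlam0 : 0 < lam)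
    (hlam1 : lam ≤ 1) (hd : DifferentiableOn ℂ g (ball 0 1)) (hg0 : g 0 = 1)
    (hm : MapsTo g (ball 0 1) (ball 1 lam)) {z : ℂ} (hz : ‖z‖ < 1) :
    ‖z * logDeriv g z‖ ≤ lam * ‖z‖ / (1 - ‖z‖) := by
  have hz' : z ∈ ball (0 : ℂ) 1 := mem_ball_zero_iff.2 hz
  set s := ‖g z - 1‖
  have hs : s ≤ lam * ‖z‖ := by
    simpa [hg0, dist_eq] using dist_le_div_mul_dist_of_mapsTo_ball hd
      (by rw [hg0]; exact hm.mono_right ball_subset_closedBall) hz'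
  have hg' : HasDerivAt g (deriv g z) z :=
    (hd.differentiableAt (isOpen_ball.mem_nhds hz')).hasDerivAt
  have hpick := norm_deriv_mul_le_of_mapsTo_ball (ω := fun w => (g w - 1) / lam)
    (fun w hw => (((hd.differentiableAt (isOpen_ball.mem_nhds hw)).sub_const 1).div_const
      _).differentiableWithinAt)
    (fun w hw => by
      have := hm hw
      rw [mem_ball, dist_eq] at this
      rw [mem_ball_zero_iff, norm_div, norm_real, Real.norm_of_nonneg hlam0.le,
        div_lt_one hlam0]
      exact this) hz
  rw [((hg'.sub_const 1).div_const _).deriv, norm_div, norm_div, norm_real,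
    Real.norm_of_nonneg hlam0.le] at hpick
  have hr := norm_nonneg z
  have hgz : 1 - s ≤ ‖g z‖ := by
    have := norm_sub_norm_le (1 : ℂ) (1 - g z)
    rw [norm_one, sub_sub_cancel, norm_sub_rev] at this
    linarith
  have hs1 : s < 1 := by nlinarith
  -- `(λ - s)(λ + s) ≤ λ(1 - s) · λ(1 + r)`, using `λ ≤ 1` and Schwarz's bound `s ≤ λ r`.
  have hG : ‖deriv g z‖ * (1 - ‖z‖) ≤ lam * ‖g z‖ := by
    have hpick' : ‖deriv g z‖ * lam * (1 - ‖z‖ ^ 2) ≤ lam ^ 2 - s ^ 2 := by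
      field_simp at hpick
      exact hpick
    have hsnn : 0 ≤ s := norm_nonneg _
    have hls : lam - s ≤ lam * (1 - s) := by nlinarith
    have hls' : lam + s ≤ lam * (1 + ‖z‖) := by linarith
    have key : ‖deriv g z‖ * (1 - ‖z‖) * (lam * (1 + ‖z‖))
        ≤ lam * (1 - s) * (lam * (1 + ‖z‖)) :=
      calc _ = ‖deriv g z‖ * lam * (1 - ‖z‖ ^ 2) := by ring
        _ ≤ (lam - s) * (lam + s) := hpick'.trans_eq (by ring)
        _ ≤ _ := mul_le_mul hls hls' (by linarith) (by nlinarith)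
    have := le_of_mul_le_mul_right key (by positivity)
    nlinarith
  have hq : ‖deriv g z‖ / ‖g z‖ ≤ lam / (1 - ‖z‖) := by
    rw [div_le_div_iff₀ (by linarith) (by linarith)]
    linarith
  rw [logDeriv_apply, norm_mul, norm_div]
  exact (mul_le_mul_of_nonneg_left hq hr).trans_eq (by ring)

lemma logDeriv_cpow_const {p : ℂ → ℂ} {c z : ℂ} (hp : DifferentiableAt ℂ p z)
    (hslit : p z ∈ slitPlane) : logDeriv (fun w => p w ^ c) z = c * logDeriv p z := by
  have hpz : p z ≠ 0 := slitPlane_ne_zero hslit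
  have hpc : p z ^ c ≠ 0 := cpow_ne_zero_iff.2 (.inl hpz)
  rw [logDeriv_apply, (hp.hasDerivAt.cpow_const hslit).deriv, logDeriv_apply, cpow_sub _ _ hpz,
    cpow_one]
  field_simp

lemma logDeriv_mul_cpow {g p : ℂ → ℂ} {c z : ℂ} (hg : DifferentiableAt ℂ g z) (hgz : g z ≠ 0)
    (hp : DifferentiableAt ℂ p z) (hslit : p z ∈ slitPlane) :
    logDeriv (fun w => g w * p w ^ c) z = logDeriv g z + c * logDeriv p z := by
  rw [logDeriv_mul (g := fun w => p w ^ c) z hgz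
    (cpow_ne_zero_iff.2 (.inl (slitPlane_ne_zero hslit))) hg
    (hp.hasDerivAt.cpow_const hslit).differentiableAt, logDeriv_cpow_const hp hslit]

theorem re_one_add_mul_logDeriv_pos_of_eqOn_mul_cpow {h g p : ℂ → ℂ} {c : ℂ} {lam : ℝ}
    (hlam0 : 0 < lam) (hlam1 : lam ≤ 1) (hg : DifferentiableOn ℂ g (ball 0 1)) (hg0 : g 0 = 1)
    (hgm : MapsTo g (ball 0 1) (ball 1 lam)) (hp : DifferentiableOn ℂ p (ball 0 1))
    (hpre : MapsTo p (ball 0 1) {w | 0 < w.re}) (hh : EqOn h (fun w => g w * p w ^ c) (ball 0 1))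
    {z : ℂ} (hz : ‖z‖ < 1)
    (hzc : lam * ‖z‖ / (1 - ‖z‖) + ‖c‖ * (2 * ‖z‖ / (1 - ‖z‖ ^ 2)) < 1) :
    h z ≠ 0 ∧ 0 < (1 + z * logDeriv h z).re := by
  have hz' : z ∈ ball (0 : ℂ) 1 := mem_ball_zero_iff.2 hz
  have hgz : g z ≠ 0 := by
    intro h0
    have := hgm hz'
    rw [h0, mem_ball, dist_zero_left, norm_one] at this
    linarith
  have hslit : p z ∈ slitPlane := mem_slitPlane_iff.2 (.inl (hpre hz'))
  have hgd := hg.differentiableAt (isOpen_ball.mem_nhds hz')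
  have hpd := hp.differentiableAt (isOpen_ball.mem_nhds hz')
  refine ⟨?_, ?_⟩
  · rw [hh hz']
    exact mul_ne_zero hgz (cpow_ne_zero_iff.2 (.inl (slitPlane_ne_zero hslit)))
  · have hG := norm_mul_logDeriv_le_of_mapsTo_ball_one hlam0 hlam1 hg hg0 hgm hz
    have hP := norm_mul_logDeriv_le_of_re_pos hp hpre hz
    rw [(logDeriv_congr_nhds (hh.eventuallyEq_of_mem (isOpen_ball.mem_nhds hz'))).eq_of_nhds,
      logDeriv_mul_cpow hgd hgz hpd hslit, mul_add, mul_left_comm, add_re, one_re]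
    have hsum := norm_add_le (z * logDeriv g z) (c * (z * logDeriv p z))
    rw [norm_mul c] at hsum
    have := neg_le_of_abs_le (abs_re_le_norm (z * logDeriv g z + c * (z * logDeriv p z)))
    nlinarith [norm_nonneg c]

lemma mul_sq_add_mul_lt_one_of_lt_root {a b r : ℝ} (ha : 0 < a) (hb : 0 ≤ b) (hr : 0 ≤ r)
    (hrR : r < (-b + √(b ^ 2 + 4 * a)) / (2 * a)) : a * r ^ 2 + b * r < 1 := by
  set R := (-b + √(b ^ 2 + 4 * a)) / (2 * a)
  have hsq : √(b ^ 2 + 4 * a) ^ 2 = b ^ 2 + 4 * a := Real.sq_sqrt (by positivity)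
  have hR : 2 * a * R + b = √(b ^ 2 + 4 * a) := by
    simp only [R]; field_simp; ring
  have hroot : a * R ^ 2 + b * R = 1 := by
    have := congrArg (· ^ 2) hR
    simp only [hsq] at this
    nlinarith
  nlinarith [mul_pos (sub_pos.2 hrR) (show 0 < a * (R + r) + b by nlinarith)]

lemma lt_one_and_bound_of_quadratic_lt_one {lam k r : ℝ} (hlam : 0 ≤ lam) (hk : 0 ≤ k)
    (hr : 0 ≤ r) (h : (lam + 1) * r ^ 2 + (lam + 2 * k) * r < 1) :
    r < 1 ∧ lam * r / (1 - r) + k * (2 * r / (1 - r ^ 2)) < 1 := by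
  have hr1 : r < 1 := by nlinarith
  refine ⟨hr1, ?_⟩
  have hr2 : 0 < 1 - r ^ 2 := by nlinarith
  have : lam * r / (1 - r) = lam * r * (1 + r) / (1 - r ^ 2) := by
    field_simp [(sub_pos.2 hr1).ne']
    ring
  rw [this, mul_div_assoc', ← add_div, div_lt_one hr2]
  nlinarith

section dslope

variable {f : ℂ → ℂ}

lemma dslope_zero_eq_div (hf0 : f 0 = 0) {w : ℂ} (hw : w ≠ 0) : dslope f 0 w = f w / w := by
  rw [dslope_of_ne f hw, slope_def_field, hf0, sub_zero, sub_zero]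

lemma mapsTo_dslope_zero_re_pos (hf0 : f 0 = 0) (hf'0 : deriv f 0 = 1)
    (hP : ∀ z ∈ ball (0 : ℂ) 1, z ≠ 0 → 0 < (f z / z).re) :
    MapsTo (dslope f 0) (ball 0 1) {w | 0 < w.re} := fun w hw => by
  rcases eq_or_ne w 0 with rfl | hw0
  · simp [hf'0]
  · show 0 < (dslope f 0 w).re
    rw [dslope_zero_eq_div hf0 hw0]
    exact hP w hw hw0

lemma mapsTo_deriv_mul_dslope_zero_cpow_neg {c : ℂ} {lam : ℝ} (hlam : 0 < lam)
    (hf0 : f 0 = 0) (hf'0 : deriv f 0 = 1)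
    (hP : ∀ z ∈ ball (0 : ℂ) 1, z ≠ 0 → 0 < (f z / z).re)
    (hU : ∀ z ∈ ball (0 : ℂ) 1, z ≠ 0 → ‖deriv f z * (z / f z) ^ c - 1‖ < lam) :
    MapsTo (fun w => deriv f w * dslope f 0 w ^ (-c)) (ball 0 1) (ball 1 lam) := fun w hw => by
  rw [mem_ball, dist_eq]
  rcases eq_or_ne w 0 with rfl | hw0
  · simpa [hf'0] using hlam
  · have harg : (f w / w).arg ≠ Real.pi := fun h =>
      (arg_eq_pi_iff.1 h).1.not_gt (hP w hw hw0)
    show ‖deriv f w * dslope f 0 w ^ (-c) - 1‖ < lam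
    rw [dslope_zero_eq_div hf0 hw0, cpow_neg, ← inv_cpow _ _ harg, inv_div]
    exact hU w hw hw0

end dslope

theorem stmt_16 (lam α : ℝ) (hlam : lam ∈ Set.Ioc (0 : ℝ) 1)
    (hα : α ∈ Set.Ioc (0 : ℝ) 1)
    (f : ℂ → ℂ) (hanal : DifferentiableOn ℂ f (ball (0 : ℂ) 1))
    (hf0 : f 0 = 0) (hf'0 : deriv f 0 = 1)
    (hP : ∀ z ∈ ball (0 : ℂ) 1, z ≠ 0 → 0 < (f z / z).re)
    (hU : ∀ z ∈ ball (0 : ℂ) 1, z ≠ 0 →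
      ‖deriv f z * (z / f z) ^ ((α : ℂ) + 1) - 1‖ < lam)
    (R : ℝ)
    (hR : R = (-(lam + 2 * (α + 1)) +
      Real.sqrt (lam ^ 2 + 8 * lam + 4 * α * lam + 4 * α ^ 2 + 8 * α + 8)) /
      (2 * (lam + 1))) :
    ∀ z : ℂ, ‖z‖ < R →
      deriv f z ≠ 0 ∧ 0 < (1 + z * deriv (deriv f) z / deriv f z).re := by
  obtain ⟨hlam0, hlam1⟩ := hlam
  obtain ⟨hα0, -⟩ := hα
  intro z hz
  set p := dslope f 0
  set c : ℂ := α + 1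
  set g := fun w => deriv f w * p w ^ (-c)
  have hc : ‖c‖ = α + 1 := by
    rw [show c = ((α + 1 : ℝ) : ℂ) by push_cast; rfl, norm_real,
      Real.norm_of_nonneg (by linarith)]
  have hpd : DifferentiableOn ℂ p (ball 0 1) :=
    (differentiableOn_dslope (ball_mem_nhds _ one_pos)).2 hanal
  have hpre := mapsTo_dslope_zero_re_pos hf0 hf'0 hP
  have hgm : MapsTo g (ball 0 1) (ball 1 lam) :=
    mapsTo_deriv_mul_dslope_zero_cpow_neg hlam0 hf0 hf'0 hP hU
  have hslit : MapsTo p (ball 0 1) slitPlane := fun w hw => mem_slitPlane_iff.2 (.inl (hpre hw))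
  have hgd : DifferentiableOn ℂ g (ball 0 1) :=
    (hanal.deriv isOpen_ball).mul (hpd.cpow_const hslit)
  have hfg : EqOn (deriv f) (fun w => g w * p w ^ c) (ball 0 1) := fun w hw => by
    show deriv f w = deriv f w * p w ^ (-c) * p w ^ c
    rw [mul_assoc, ← cpow_add _ _ (slitPlane_ne_zero (hslit hw)), neg_add_cancel, cpow_zero,
      mul_one]
  have hdisc : lam ^ 2 + 8 * lam + 4 * α * lam + 4 * α ^ 2 + 8 * α + 8
      = (lam + 2 * (α + 1)) ^ 2 + 4 * (lam + 1) := by ring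
  rw [hR, hdisc] at hz
  have hq := mul_sq_add_mul_lt_one_of_lt_root (by linarith) (by linarith) (norm_nonneg z) hz
  obtain ⟨hz1, hzc⟩ :=
    lt_one_and_bound_of_quadratic_lt_one hlam0.le (by linarith) (norm_nonneg z) hq
  rw [← hc] at hzc
  simpa only [logDeriv_apply, mul_div_assoc] using
    re_one_add_mul_logDeriv_pos_of_eqOn_mul_cpow hlam0 hlam1 hgd (by simp [g, p, hf'0]) hgm
      hpd hpre hfg hz1 hzc
end

section
/- Let 0 < λ ≤ 1 and 0 < α ≤ 1. Let f be analytic on the open unit disk 𝔻 with f(0) = 0 and f′(0) = 1, suppose Re(f(z)/z) > 0 for all z ∈ 𝔻 \ {0} (with f(z)/z → 1 as z → 0), and suppose |f′(z)·(z/f(z))^{α+1} − 1| < λ for all z ∈ 𝔻 \ {0}, where the power is the principal branch. Set R_{λ,α} = ( −(λ + 4α) + √(λ² + 20α² + 12λα) ) / (2(λ+α)). Then for every z ∈ 𝔻 \ {0} with |z| < R_{λ,α}, f′(z) ≠ 0, f(z) ≠ 0 and Re( (1/α)·(1 + z f″(z)/f′(z)) + (1 − 1/α)·(z f′(z)/f(z))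 ) > 0; that is, f is (1/α)-convex in |z| < R_{λ,α}. -/
/-!
Write `q(z) = f(z)/z` and `H(z) = f′(z) (z/f(z))^(α+1)`. Logarithmic differentiation turns the
`1/α`-convexity functional into `1 + (1/α) z H′/H + 2 z q′/q`. Since `(H - 1)/λ` is a Schwarz
function, Schwarz–Pick gives `|z H′/H| ≤ λ r/(1 - r)`; since `Re q > 0`, Schwarz–Pick for the
Cayley transform `(q - 1)/(q + 1)` gives `|z q′/q| ≤ 2r/(1 - r²)`. So the real part exceeds
`1 - λ r/(α(1 - r)) - 4r/(1 - r²)`, which is positive iff `(λ + α) r² + (λ + 4α) r - α < 0`,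
and `R_{λ,α}` is the positive root of this quadratic.
-/

open Complex ComplexConjugate Metric Set Filter Topology

namespace Complex

noncomputable def mobius (a w : ℂ) : ℂ := (w + a) / (1 + conj a * w)

lemma one_add_conj_mul_ne_zero {a w : ℂ} (ha : ‖a‖ < 1) (hw : ‖w‖ < 1) :
    1 + conj a * w ≠ 0 := by
  intro h
  have : ‖conj a * w‖ < 1 := by
    rw [norm_mul, norm_conj]; nlinarith [norm_nonneg a, norm_nonneg w]
  rw [eq_neg_of_add_eq_zero_right h, norm_neg, norm_one] at this
  exact this.false

lemma normSq_one_add_conj_mul_sub_normSq_add (a w : ℂ) :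
    normSq (1 + conj a * w) - normSq (w + a) = (1 - normSq a) * (1 - normSq w) := by
  simp only [normSq_apply, add_re, add_im, mul_re, mul_im, conj_re, conj_im, one_re, one_im]
  ring

lemma norm_mobius_lt_one {a w : ℂ} (ha : ‖a‖ < 1) (hw : ‖w‖ < 1) : ‖mobius a w‖ < 1 := by
  have hpos : 0 < (1 - normSq a) * (1 - normSq w) := by
    rw [← Complex.sq_norm, ← Complex.sq_norm]
    exact mul_pos (by nlinarith [norm_nonneg a]) (by nlinarith [norm_nonneg w])
  rw [mobius, norm_div, div_lt_one (norm_pos_iff.mpr (one_add_conj_mul_ne_zero ha hw)),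
    ← sq_lt_sq₀ (norm_nonneg _) (norm_nonneg _), Complex.sq_norm, Complex.sq_norm]
  linarith [normSq_one_add_conj_mul_sub_normSq_add a w]

lemma mobius_zero (a : ℂ) : mobius a 0 = a := by simp [mobius]

lemma mobius_neg_self (a : ℂ) : mobius (-a) a = 0 := by simp [mobius]

lemma hasDerivAt_mobius {a w : ℂ} (hw : 1 + conj a * w ≠ 0) :
    HasDerivAt (mobius a) ((1 - conj a * a) / (1 + conj a * w) ^ 2) w := by
  refine (((hasDerivAt_id' w).add_const a).div
    (((hasDerivAt_id' w).const_mul (conj a)).const_add 1) hw).congr_deriv ?_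
  ring

lemma differentiableOn_mobius {a : ℂ} (ha : ‖a‖ < 1) :
    DifferentiableOn ℂ (mobius a) (ball 0 1) := fun _ hw =>
  (hasDerivAt_mobius (one_add_conj_mul_ne_zero ha (mem_ball_zero_iff.mp hw))).differentiableAt
    |>.differentiableWithinAt

lemma mapsTo_mobius {a : ℂ} (ha : ‖a‖ < 1) : MapsTo (mobius a) (ball 0 1) (ball 0 1) :=
  fun _ hw => mem_ball_zero_iff.mpr (norm_mobius_lt_one ha (mem_ball_zero_iff.mp hw))

theorem norm_deriv_mul_one_sub_sq_le_of_mapsTo_ball {g : ℂ → ℂ}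
    (hd : DifferentiableOn ℂ g (ball 0 1)) (hg : MapsTo g (ball 0 1) (ball 0 1)) {a : ℂ}
    (ha : a ∈ ball 0 1) :
    ‖deriv g a‖ * (1 - ‖a‖ ^ 2) ≤ 1 - ‖g a‖ ^ 2 := by
  have ha' : ‖a‖ < 1 := mem_ball_zero_iff.mp ha
  have hb : ‖g a‖ < 1 := mem_ball_zero_iff.mp (hg ha)
  have hb' : ‖-g a‖ < 1 := by rwa [norm_neg]
  have ha2 : 0 < 1 - ‖a‖ ^ 2 := by nlinarith [norm_nonneg a]
  have hb2 : 0 < 1 - ‖g a‖ ^ 2 := by nlinarith [norm_nonneg (g a)]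
  -- `G` fixes `0`, and the Schwarz lemma `‖G′(0)‖ ≤ 1` is the claim.
  set G := mobius (-g a) ∘ g ∘ mobius a
  have hG0 : G 0 = 0 := by simp [G, mobius_zero, mobius_neg_self]
  have hGmaps : MapsTo G (ball 0 1) (ball 0 1) :=
    (mapsTo_mobius hb').comp (hg.comp (mapsTo_mobius ha'))
  have hGdiff : DifferentiableOn ℂ G (ball 0 1) :=
    (differentiableOn_mobius hb').comp (hd.comp (differentiableOn_mobius ha')
      (mapsTo_mobius ha')) (hg.comp (mapsTo_mobius ha'))
  have hGderiv : HasDerivAt G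
      (((1 - ‖g a‖ ^ 2 : ℝ) : ℂ)⁻¹ * (deriv g a * ((1 - ‖a‖ ^ 2 : ℝ) : ℂ))) 0 := by
    have hga : HasDerivAt g (deriv g a) (mobius a 0) := by
      rw [mobius_zero]; exact (hd.differentiableAt (isOpen_ball.mem_nhds ha)).hasDerivAt
    refine ((hasDerivAt_mobius ?_).comp 0 (hga.comp 0 (hasDerivAt_mobius (by simp)))).congr_deriv ?_
    · rw [Function.comp_apply, mobius_zero]; exact one_add_conj_mul_ne_zero hb' hb
    have : (1 : ℂ) - ‖g a‖ ^ 2 ≠ 0 := by exact_mod_cast hb2.ne'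
    simp only [Function.comp_apply, mobius_zero, map_neg, neg_mul, mul_neg, conj_mul', mul_zero,
      add_zero, one_pow, div_one, sub_neg_eq_add, ← sub_eq_add_neg]
    push_cast
    field_simp
  have hschwarz := norm_deriv_le_one_of_mapsTo_ball hGdiff
    (by rw [hG0]; exact hGmaps.mono_right ball_subset_closedBall) one_pos
  rw [hGderiv.deriv, norm_mul, norm_mul, norm_inv, norm_real, norm_real,
    Real.norm_of_nonneg hb2.le, Real.norm_of_nonneg ha2.le, inv_mul_le_iff₀ hb2] at hschwarz
  linarith

lemma sq_norm_add_one_sub_sq_norm_sub_one (w : ℂ) : ‖w + 1‖ ^ 2 - ‖w - 1‖ ^ 2 = 4 * w.re := by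
  simp only [Complex.sq_norm, normSq_apply, add_re, add_im, sub_re, sub_im, one_re, one_im]
  ring

theorem norm_deriv_mul_one_sub_sq_le_two_mul_re {p : ℂ → ℂ}
    (hd : DifferentiableOn ℂ p (ball 0 1)) (hp : ∀ w ∈ ball (0 : ℂ) 1, 0 < (p w).re)
    {z : ℂ} (hz : z ∈ ball 0 1) :
    ‖deriv p z‖ * (1 - ‖z‖ ^ 2) ≤ 2 * (p z).re := by
  have hne : ∀ w ∈ ball (0 : ℂ) 1, p w + 1 ≠ 0 := fun w hw h => by
    have := hp w hw
    rw [eq_neg_of_add_eq_zero_left h] at this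
    norm_num at this
  have hcayley : MapsTo (fun w => (p w - 1) / (p w + 1)) (ball 0 1) (ball 0 1) := fun w hw => by
    rw [mem_ball_zero_iff, norm_div, div_lt_one (norm_pos_iff.mpr (hne w hw)),
      ← sq_lt_sq₀ (norm_nonneg _) (norm_nonneg _), ← sub_pos,
      sq_norm_add_one_sub_sq_norm_sub_one]
    linarith [hp w hw]
  have hderiv : HasDerivAt (fun w => (p w - 1) / (p w + 1)) (2 * deriv p z / (p z + 1) ^ 2) z := by
    have hpz := (hd.differentiableAt (isOpen_ball.mem_nhds hz)).hasDerivAt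
    exact ((hpz.sub_const 1).div (hpz.add_const 1) (hne z hz)).congr_deriv (by ring)
  have key := norm_deriv_mul_one_sub_sq_le_of_mapsTo_ball (g := fun w => (p w - 1) / (p w + 1))
    (fun w hw => ((hd w hw).sub_const 1).div ((hd w hw).add_const 1) (hne w hw)) hcayley hz
  have hpos : 0 < ‖p z + 1‖ ^ 2 := by have := norm_pos_iff.mpr (hne z hz); positivity
  rw [hderiv.deriv, norm_div, norm_mul, norm_pow, norm_div, div_pow, div_mul_eq_mul_div,
    one_sub_div hpos.ne', div_le_div_iff_of_pos_right hpos,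
    sq_norm_add_one_sub_sq_norm_sub_one] at key
  norm_num at key
  linarith

theorem norm_logDeriv_mul_one_sub_sq_le_two {p : ℂ → ℂ}
    (hd : DifferentiableOn ℂ p (ball 0 1)) (hp : ∀ w ∈ ball (0 : ℂ) 1, 0 < (p w).re)
    {z : ℂ} (hz : z ∈ ball 0 1) :
    ‖logDeriv p z‖ * (1 - ‖z‖ ^ 2) ≤ 2 := by
  have hpz : 0 < ‖p z‖ := (hp z hz).trans_le (re_le_norm _)
  rw [logDeriv_apply, norm_div, div_mul_eq_mul_div, div_le_iff₀ hpz]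
  linarith [norm_deriv_mul_one_sub_sq_le_two_mul_re hd hp hz, re_le_norm (p z)]

theorem norm_logDeriv_mul_one_sub_le_of_norm_sub_one_lt {H : ℂ → ℂ} {lam : ℝ} (hlam : lam ≤ 1)
    (hd : DifferentiableOn ℂ H (ball 0 1)) (h0 : H 0 = 1)
    (hH : ∀ w ∈ ball (0 : ℂ) 1, ‖H w - 1‖ < lam) {z : ℂ} (hz : z ∈ ball 0 1) :
    ‖logDeriv H z‖ * (1 - ‖z‖) ≤ lam := by
  have hlam0 : 0 < lam := by simpa [h0] using hH 0 (mem_ball_self one_pos)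
  set u : ℂ → ℂ := fun w => (H w - 1) / lam
  have hud : DifferentiableOn ℂ u (ball 0 1) := fun w hw => ((hd w hw).sub_const 1).div_const _
  have hu : MapsTo u (ball 0 1) (ball 0 1) := fun w hw => by
    rw [mem_ball_zero_iff, norm_div, norm_real, Real.norm_of_nonneg hlam0.le, div_lt_one hlam0]
    exact hH w hw
  have hu0 : u 0 = 0 := by simp [u, h0]
  have hlamC : (lam : ℂ) ≠ 0 := by exact_mod_cast hlam0.ne'
  set r := ‖z‖
  set t := ‖u z‖
  have hr : r < 1 := mem_ball_zero_iff.mp hz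
  have htr : t ≤ r :=
    norm_le_norm_of_mapsTo_ball hud (hu.mono_right ball_subset_closedBall) hu0 hr
  have hpick := norm_deriv_mul_one_sub_sq_le_of_mapsTo_ball hud hu hz
  have hderiv : deriv H z = lam * deriv u z := by
    rw [((hd.differentiableAt (isOpen_ball.mem_nhds hz)).hasDerivAt.sub_const 1 |>.div_const
      (lam : ℂ)).deriv]
    field_simp
  have hHz : 1 - lam * t ≤ ‖H z‖ := by
    have hdist : ‖H z - 1‖ = lam * t := by
      rw [show H z - 1 = lam * u z by simp [u]; field_simp, norm_mul, norm_real,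
        Real.norm_of_nonneg hlam0.le]
    have htri := norm_sub_norm_le (1 : ℂ) (H z)
    rw [norm_one, norm_sub_rev, hdist] at htri
    linarith
  have ht0 : 0 ≤ t := norm_nonneg _
  have hlt : lam * t ≤ t := mul_le_of_le_one_left ht0 hlam
  have hu' : ‖deriv u z‖ * (1 - r) ≤ 1 - lam * t := by
    refine le_of_mul_le_mul_right ?_ (by positivity : 0 < 1 + r)
    calc ‖deriv u z‖ * (1 - r) * (1 + r) = ‖deriv u z‖ * (1 - r ^ 2) := by ring
      _ ≤ (1 - t) * (1 + t) := by linarith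
      _ ≤ (1 - lam * t) * (1 + r) := by apply mul_le_mul <;> linarith
  rw [logDeriv_apply, norm_div, hderiv, norm_mul, norm_real, Real.norm_of_nonneg hlam0.le,
    div_mul_eq_mul_div, div_le_iff₀ (by linarith), mul_assoc]
  exact mul_le_mul_of_nonneg_left (hu'.trans hHz) hlam0.le

lemma inv_mem_slitPlane {z : ℂ} (hz : z ∈ slitPlane) : z⁻¹ ∈ slitPlane := by
  have hpos : 0 < normSq z := normSq_pos.mpr (slitPlane_ne_zero hz)
  rw [mem_slitPlane_iff, inv_re, inv_im] at *
  rcases hz with hre | him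
  · exact Or.inl (div_pos hre hpos)
  · exact Or.inr (div_ne_zero (neg_ne_zero.mpr him) hpos.ne')

theorem logDeriv_inv_cpow_const {g : ℂ → ℂ} {z : ℂ} (c : ℂ) (hg : DifferentiableAt ℂ g z)
    (hz : g z ∈ slitPlane) :
    logDeriv (fun w => (g w)⁻¹ ^ c) z = -c * logDeriv g z := by
  have hne : g z ≠ 0 := slitPlane_ne_zero hz
  have hpow : (g z)⁻¹ ^ c ≠ 0 := cpow_ne_zero_iff.mpr (Or.inl (inv_ne_zero hne))
  rw [logDeriv_apply, ((hg.hasDerivAt.fun_inv hne).cpow_const (inv_mem_slitPlane hz)).deriv,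
    cpow_sub _ _ (inv_ne_zero hne), cpow_one, logDeriv_apply]
  generalize (g z)⁻¹ ^ c = P at hpow ⊢
  field_simp

end Complex

theorem mul_logDeriv_dslope_zero {𝕜 : Type*} [NontriviallyNormedField 𝕜] {f : 𝕜 → 𝕜} {z : 𝕜}
    (hf0 : f 0 = 0) (hz : z ≠ 0) (hfz : f z ≠ 0) (hd : DifferentiableAt 𝕜 f z) :
    z * logDeriv (dslope f 0) z = z * logDeriv f z - 1 := by
  have : dslope f 0 =ᶠ[𝓝 z] fun w => f w / id w :=
    (dslope_eventuallyEq_slope_of_ne f hz).trans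
      (Eventually.of_forall fun w => by simp [slope_def_field, hf0])
  rw [(logDeriv_congr_nhds this).eq_of_nhds, logDeriv_div z hfz hz hd differentiableAt_id,
    logDeriv_id]
  field_simp

theorem re_dslope_zero_pos {f : ℂ → ℂ} (hf0 : f 0 = 0) (hf'0 : deriv f 0 = 1)
    (hP : ∀ z ∈ ball (0 : ℂ) 1, z ≠ 0 → 0 < (f z / z).re) :
    ∀ w ∈ ball (0 : ℂ) 1, 0 < (dslope f 0 w).re := fun w hw => by
  rcases eq_or_ne w 0 with rfl | hw0
  · simp [hf'0]
  · simpa [dslope_of_ne _ hw0, slope_def_field, hf0] using hP w hw hw0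

/-- `f′(w) (w / f(w))^c`, with `f(w)/w` taken as `dslope f 0 w`, which is defined at `0`. -/
noncomputable def derivMulDivCpow (f : ℂ → ℂ) (c w : ℂ) : ℂ :=
  deriv f w * (dslope f 0 w)⁻¹ ^ c

section derivMulDivCpow

variable {f : ℂ → ℂ} {c : ℂ}

lemma derivMulDivCpow_zero (hf'0 : deriv f 0 = 1) : derivMulDivCpow f c 0 = 1 := by
  simp [derivMulDivCpow, hf'0]

lemma derivMulDivCpow_of_ne_zero (hf0 : f 0 = 0) {w : ℂ} (hw : w ≠ 0) :
    derivMulDivCpow f c w = deriv f w * (w / f w) ^ c := by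
  simp [derivMulDivCpow, dslope_of_ne _ hw, slope_def_field, hf0]

lemma differentiableOn_derivMulDivCpow (hf : DifferentiableOn ℂ f (ball 0 1))
    (hq : ∀ w ∈ ball (0 : ℂ) 1, 0 < (dslope f 0 w).re) :
    DifferentiableOn ℂ (derivMulDivCpow f c) (ball 0 1) :=
  have hq_diff := (differentiableOn_dslope (ball_mem_nhds _ one_pos)).mpr hf
  (hf.deriv isOpen_ball).mul <| (hq_diff.inv fun w hw => slitPlane_ne_zero (Or.inl (hq w hw)))
    |>.cpow_const fun w hw => inv_mem_slitPlane (Or.inl (hq w hw))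

lemma mul_logDeriv_derivMulDivCpow (hf : DifferentiableOn ℂ f (ball 0 1))
    (hq : ∀ w ∈ ball (0 : ℂ) 1, 0 < (dslope f 0 w).re) (hf0 : f 0 = 0) {z : ℂ}
    (hz : z ∈ ball (0 : ℂ) 1) (hz0 : z ≠ 0) (hfz : f z ≠ 0) (hf'z : deriv f z ≠ 0) :
    z * logDeriv (derivMulDivCpow f c) z =
      z * logDeriv (deriv f) z - c * (z * logDeriv f z - 1) := by
  have hnhds := isOpen_ball.mem_nhds hz
  have hslit : dslope f 0 z ∈ slitPlane := Or.inl (hq z hz)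
  have hqd : DifferentiableAt ℂ (dslope f 0) z :=
    ((differentiableOn_dslope (ball_mem_nhds _ one_pos)).mpr hf).differentiableAt hnhds
  have hpow : (dslope f 0 z)⁻¹ ^ c ≠ 0 :=
    cpow_ne_zero_iff.mpr (Or.inl (inv_ne_zero (slitPlane_ne_zero hslit)))
  unfold derivMulDivCpow
  rw [logDeriv_mul (f := deriv f) (g := fun w => (dslope f 0 w)⁻¹ ^ c) z hf'z
    hpow ((hf.deriv isOpen_ball).differentiableAt hnhds)
    ((hqd.inv (slitPlane_ne_zero hslit)).cpow_const (inv_mem_slitPlane hslit)),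
    logDeriv_inv_cpow_const c hqd hslit, ← mul_logDeriv_dslope_zero hf0 hz0 hfz
    (hf.differentiableAt hnhds)]
  ring

end derivMulDivCpow

theorem mul_sq_add_mul_sub_neg_of_lt_root {a b c r : ℝ} (ha : 0 < a) (hc : 0 < c) (hr : 0 ≤ r)
    (hlt : r < (-b + √(b ^ 2 + 4 * a * c)) / (2 * a)) :
    a * r ^ 2 + b * r - c < 0 := by
  set s := √(b ^ 2 + 4 * a * c)
  have hs : s ^ 2 = b ^ 2 + 4 * a * c := Real.sq_sqrt (by positivity)
  have hs0 : 0 ≤ s := Real.sqrt_nonneg _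
  rw [lt_div_iff₀ (by positivity)] at hlt
  have hb : -s < b := by nlinarith
  nlinarith [mul_pos (sub_pos.mpr hlt) (by nlinarith : 0 < s + r * (2 * a) + b)]

theorem one_add_inv_mul_add_two_mul_re_pos {α lam : ℝ} {z x y : ℂ} (hα : 0 < α)
    (hz : ‖z‖ < 1) (hquad : (lam + α) * ‖z‖ ^ 2 + (lam + 4 * α) * ‖z‖ - α < 0)
    (hx : ‖x‖ * (1 - ‖z‖) ≤ lam) (hy : ‖y‖ * (1 - ‖z‖ ^ 2) ≤ 2) :
    0 < (1 + (α : ℂ)⁻¹ * (z * x) + 2 * (z * y)).re := by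
  have hre : 1 - α⁻¹ * ‖z * x‖ - 2 * ‖z * y‖ ≤ (1 + (α : ℂ)⁻¹ * (z * x) + 2 * (z * y)).re := by
    have h2 : (2 * (z * y)).re = 2 * (z * y).re := by simp
    rw [← ofReal_inv, add_re, add_re, one_re, re_ofReal_mul, h2]
    have := mul_le_mul_of_nonneg_left (neg_le_of_abs_le (abs_re_le_norm (z * x)))
      (inv_nonneg.mpr hα.le)
    linarith [neg_le_of_abs_le (abs_re_le_norm (z * y))]
  refine lt_of_lt_of_le ?_ hre
  rw [← mul_lt_mul_iff_right₀ hα, mul_zero, mul_sub, mul_sub, mul_one,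
    mul_inv_cancel_left₀ hα.ne', norm_mul, norm_mul]
  have hr := norm_nonneg z
  refine pos_of_mul_pos_left (b := 1 - ‖z‖ ^ 2) ?_ (by nlinarith)
  nlinarith [mul_le_mul_of_nonneg_left hx hr, mul_le_mul_of_nonneg_left hy hr]

theorem stmt_18 (lam α : ℝ) (hlam : lam ∈ Set.Ioc (0 : ℝ) 1)
    (hα : α ∈ Set.Ioc (0 : ℝ) 1)
    (f : ℂ → ℂ) (hanal : DifferentiableOn ℂ f (ball (0 : ℂ) 1))
    (hf0 : f 0 = 0) (hf'0 : deriv f 0 = 1)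
    (hP : ∀ z ∈ ball (0 : ℂ) 1, z ≠ 0 → 0 < (f z / z).re)
    (hU : ∀ z ∈ ball (0 : ℂ) 1, z ≠ 0 →
      ‖deriv f z * (z / f z) ^ ((α : ℂ) + 1) - 1‖ < lam)
    (R : ℝ)
    (hR : R = (-(lam + 4 * α) +
      Real.sqrt (lam ^ 2 + 20 * α ^ 2 + 12 * lam * α)) / (2 * (lam + α))) :
    ∀ z : ℂ, z ≠ 0 → ‖z‖ < R →
      deriv f z ≠ 0 ∧ f z ≠ 0 ∧
      0 < (((α : ℂ))⁻¹ * (1 + z * deriv (deriv f) z / deriv f z) +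
        (1 - ((α : ℂ))⁻¹) * (z * deriv f z / f z)).re := by
  intro z hz hzR
  obtain ⟨hlam0, hlam1⟩ := hlam
  have hα0 : 0 < α := hα.1
  have hq := re_dslope_zero_pos hf0 hf'0 hP
  set H := derivMulDivCpow f ((α : ℂ) + 1)
  have hH : ∀ w ∈ ball (0 : ℂ) 1, ‖H w - 1‖ < lam := fun w hw => by
    rcases eq_or_ne w 0 with rfl | hw0
    · simpa [H, derivMulDivCpow_zero hf'0] using hlam0
    · simpa [H, derivMulDivCpow_of_ne_zero hf0 hw0] using hU w hw hw0
  have hquad : (lam + α) * ‖z‖ ^ 2 + (lam + 4 * α) * ‖z‖ - α < 0 := by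
    refine mul_sq_add_mul_sub_neg_of_lt_root (by positivity) hα0 (norm_nonneg z) ?_
    convert hR ▸ hzR using 4; ring
  have hzb : z ∈ ball (0 : ℂ) 1 := mem_ball_zero_iff.mpr (by nlinarith [norm_nonneg z])
  have hfz : f z ≠ 0 := fun h => by simpa [h] using hP z hzb hz
  have hf'z : deriv f z ≠ 0 := fun h => by
    simpa [H, derivMulDivCpow_of_ne_zero hf0 hz, h] using (hH z hzb).trans_le hlam1
  refine ⟨hf'z, hfz, ?_⟩
  have hfunctional : ((α : ℂ))⁻¹ * (1 + z * deriv (deriv f) z / deriv f z) +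
      (1 - ((α : ℂ))⁻¹) * (z * deriv f z / f z) =
      1 + (α : ℂ)⁻¹ * (z * logDeriv H z) + 2 * (z * logDeriv (dslope f 0) z) := by
    have : (α : ℂ) ≠ 0 := by exact_mod_cast hα0.ne'
    rw [mul_div_assoc, mul_div_assoc, ← logDeriv_apply, ← logDeriv_apply,
      mul_logDeriv_derivMulDivCpow hanal hq hf0 hzb hz hfz hf'z,
      mul_logDeriv_dslope_zero hf0 hz hfz (hanal.differentiableAt (isOpen_ball.mem_nhds hzb))]
    field_simp
    ring
  rw [hfunctional]
  exact one_add_inv_mul_add_two_mul_re_pos hα0 (mem_ball_zero_iff.mp hzb) hquad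
    (norm_logDeriv_mul_one_sub_le_of_norm_sub_one_lt hlam1
      (differentiableOn_derivMulDivCpow hanal hq) (derivMulDivCpow_zero hf'0) hH hzb)
    (norm_logDeriv_mul_one_sub_sq_le_two
      ((differentiableOn_dslope (ball_mem_nhds _ one_pos)).mpr hanal) hq hzb)
end
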